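/- arXiv:1910.00563 — 5 statements merged into one kernel-verified Lean document; each statement's English description precedes it below -/
import Mathlib

section
/- Let Y be a hereditarily unicoherent Suslinian continuum with metric d. Then there exists ε > 0 such that every two ε-dense subcontinua of Y intersect. -/
/-!
By the Baire category theorem, a Suslinian continuum contains subcontinua with nonempty interior
in every closed ball that is not the whole space: the components of the ball through its interior
points are nondegenerate (boundary bumping) and pairwise disjoint, hence only countably many, and
they cover the open ball. Take two such subcontinua `A` and `B` in disjoint balls, and `ε` so small
that each contains an `ε`-ball. Two `ε`-dense subcontinua `E₀`, `E₁` then meet both `A` and `B`.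
If `E₀ ∩ E₁ = ∅`, the intersection of the subcontinua `E₀ ∪ A` and `E₁ ∪ B` lies in `A ∪ B` and
meets both, so it is disconnected, contradicting hereditary unicoherence.
-/

open Set Metric

section BoundaryBumping

variable {X : Type*} [TopologicalSpace X] [CompactSpace X]

theorem exists_isClopen_subset_of_connectedComponent_subset [T2Space X] {x : X} {U : Set X}
    (hU : IsOpen U) (h : connectedComponent x ⊆ U) : ∃ Z, IsClopen Z ∧ x ∈ Z ∧ Z ⊆ U := by
  rw [connectedComponent_eq_iInter_isClopen, ← sdiff_eq_empty, sdiff_eq, inter_comm] at h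
  obtain ⟨t, ht⟩ := hU.isClosed_compl.isCompact.elim_finite_subfamily_closed
    (fun Z : { Z : Set X // IsClopen Z ∧ x ∈ Z } ↦ (Z : Set X)) (fun Z ↦ Z.2.1.isClosed) h
  refine ⟨⋂ Z ∈ t, (Z : Set X), isClopen_biInter_finset fun Z _ ↦ Z.2.1,
    mem_iInter₂.mpr fun Z _ ↦ Z.2.2, ?_⟩
  rwa [inter_comm, ← sdiff_eq, sdiff_eq_empty] at ht

theorem IsClosed.isCompact_connectedComponentIn {F : Set X} (hF : IsClosed F) (x : X) :
    IsCompact (connectedComponentIn F x) := by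
  by_cases hx : x ∈ F
  · have : CompactSpace F := isCompact_iff_compactSpace.mp hF.isCompact
    rw [connectedComponentIn_eq_image hx]
    exact isClosed_connectedComponent.isCompact.image continuous_subtype_val
  · rw [connectedComponentIn_eq_empty hx]
    exact isCompact_empty

theorem IsClosed.connectedComponentIn_not_subset_interior [T2Space X] [PreconnectedSpace X]
    {F : Set X} (hF : IsClosed F) (hFne : F ≠ univ) {x : X} (hx : x ∈ F) :
    ¬connectedComponentIn F x ⊆ interior F := by
  intro h
  have : CompactSpace F := isCompact_iff_compactSpace.mp hF.isCompact
  obtain ⟨Z, hZ, hxZ, hZF⟩ := exists_isClopen_subset_of_connectedComponent_subset (x := ⟨x, hx⟩)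
    (isOpen_interior.preimage continuous_subtype_val)
    (by rwa [← image_subset_iff, ← connectedComponentIn_eq_image hx])
  obtain ⟨O, hO, rfl⟩ := isOpen_induced_iff.mp hZ.isOpen
  -- `Z` is clopen in `F` and lies in `interior F`, so its image is clopen in `X`.
  have himage : ((↑) '' ((↑) ⁻¹' O : Set F) : Set X) = O ∩ interior F := by
    rw [Subtype.image_preimage_coe]
    ext y
    exact ⟨fun ⟨hyF, hyO⟩ ↦ ⟨hyO, hZF (a := ⟨y, hyF⟩) hyO⟩,
      fun ⟨hyO, hyF⟩ ↦ ⟨interior_subset hyF, hyO⟩⟩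
  have hclopen : IsClopen (O ∩ interior F) :=
    ⟨himage ▸ (hZ.isClosed.isCompact.image continuous_subtype_val).isClosed,
      hO.inter isOpen_interior⟩
  refine hFne (eq_univ_of_univ_subset ?_)
  rw [← hclopen.eq_univ ⟨x, hxZ, hZF hxZ⟩]
  exact inter_subset_right.trans interior_subset

theorem IsClosed.connectedComponentIn_nontrivial [T2Space X] [PreconnectedSpace X] {F : Set X}
    (hF : IsClosed F) (hFne : F ≠ univ) {x : X} (hx : x ∈ interior F) :
    (connectedComponentIn F x).Nontrivial := by
  obtain ⟨z, hzC, hz⟩ :=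
    not_subset.mp (hF.connectedComponentIn_not_subset_interior hFne (interior_subset hx))
  exact ⟨x, mem_connectedComponentIn (interior_subset hx), z, hzC, fun h ↦ hz (h ▸ hx)⟩

end BoundaryBumping

section Continua

variable {X : Type*} [TopologicalSpace X]

def IsSubcontinuum (S : Set X) : Prop :=
  IsCompact S ∧ IsConnected S ∧ S.Nontrivial

variable (X) in
def IsSuslinian : Prop :=
  ∀ C : Set (Set X), (∀ S ∈ C, IsSubcontinuum S) → C.Pairwise Disjoint → C.Countable

variable (X) in
def IsHereditarilyUnicoherent : Prop :=
  ∀ H K : Set X, IsSubcontinuum H → IsSubcontinuum K → (H ∩ K).Nonempty → IsConnected (H ∩ K)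

theorem IsSubcontinuum.union {H K : Set X} (hH : IsSubcontinuum H) (hK : IsSubcontinuum K)
    (hHK : (H ∩ K).Nonempty) : IsSubcontinuum (H ∪ K) :=
  ⟨hH.1.union hK.1, hH.2.1.union hHK hK.2.1, hH.2.2.mono subset_union_left⟩

theorem IsSuslinian.exists_subcontinuum_interior_nonempty [CompactSpace X] [T2Space X]
    [ConnectedSpace X] (hX : IsSuslinian X) {F : Set X} (hF : IsClosed F) (hFne : F ≠ univ)
    (hint : (interior F).Nonempty) :
    ∃ Q ⊆ F, IsSubcontinuum Q ∧ (interior Q).Nonempty := by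
  have hsub : ∀ x ∈ interior F, IsSubcontinuum (connectedComponentIn F x) := fun x hx ↦
    ⟨hF.isCompact_connectedComponentIn x,
      isConnected_connectedComponentIn_iff.mpr (interior_subset hx),
      hF.connectedComponentIn_nontrivial hFne hx⟩
  have hcount : (connectedComponentIn F '' interior F).Countable := by
    refine hX _ (forall_mem_image.mpr hsub) ?_
    rintro _ ⟨x, -, rfl⟩ _ ⟨y, -, rfl⟩ hne
    refine disjoint_left.mpr fun z hzx hzy ↦ hne ?_
    rw [connectedComponentIn_eq hzx, connectedComponentIn_eq hzy]
  by_contra! h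
  -- Otherwise `interior F` is covered by countably many closed sets with empty interior.
  refine not_isMeagre_of_isOpen isOpen_interior hint
    (isMeagre_iff_countable_union_isNowhereDense.mpr ⟨_, ?_, hcount, ?_⟩)
  · rintro _ ⟨x, hx, rfl⟩
    exact (hsub x hx).1.isClosed.isNowhereDense_iff.mpr
      (h _ (connectedComponentIn_subset F x) (hsub x hx))
  · exact fun x hx ↦
      mem_sUnion_of_mem (mem_connectedComponentIn (interior_subset hx)) (mem_image_of_mem _ hx)

theorem IsHereditarilyUnicoherent.inter_nonempty [T2Space X] (hX : IsHereditarilyUnicoherent X)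
    {A B E₀ E₁ : Set X} (hA : IsSubcontinuum A) (hB : IsSubcontinuum B) (hAB : Disjoint A B)
    (hE₀ : IsSubcontinuum E₀) (hE₁ : IsSubcontinuum E₁)
    (h₀A : (E₀ ∩ A).Nonempty) (h₀B : (E₀ ∩ B).Nonempty)
    (h₁A : (E₁ ∩ A).Nonempty) (h₁B : (E₁ ∩ B).Nonempty) :
    (E₀ ∩ E₁).Nonempty := by
  by_contra h
  obtain ⟨a, ha₁, haA⟩ := h₁A
  obtain ⟨b, hb₀, hbB⟩ := h₀B
  have hconn := hX (E₀ ∪ A) (E₁ ∪ B) (hE₀.union hA h₀A) (hE₁.union hB h₁B)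
    ⟨a, Or.inr haA, Or.inl ha₁⟩
  have hsub : (E₀ ∪ A) ∩ (E₁ ∪ B) ⊆ A ∪ B := by
    rintro x ⟨hx₀ | hxA, hx₁ | hxB⟩
    exacts [absurd ⟨x, hx₀, hx₁⟩ h, Or.inr hxB, Or.inl hxA, Or.inl hxA]
  rcases isPreconnected_iff_subset_of_disjoint_closed.mp hconn.isPreconnected A B
    hA.1.isClosed hB.1.isClosed hsub (by rw [hAB.inter_eq, inter_empty]) with hA' | hB'
  · exact disjoint_left.mp hAB (hA' ⟨Or.inl hb₀, Or.inr hbB⟩) hbB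
  · exact disjoint_left.mp hAB haA (hB' ⟨Or.inr haA, Or.inl ha₁⟩)

end Continua

theorem IsSuslinian.exists_disjoint_subcontinua_ball_subset {Y : Type*} [MetricSpace Y]
    [CompactSpace Y] [ConnectedSpace Y] [Nontrivial Y] (hY : IsSuslinian Y) :
    ∃ A B : Set Y, IsSubcontinuum A ∧ IsSubcontinuum B ∧ Disjoint A B ∧
      ∃ ε > 0, ∃ a b, ball a ε ⊆ A ∧ ball b ε ⊆ B := by
  obtain ⟨p, q, hpq⟩ := exists_pair_ne Y
  have hr : 0 < dist p q / 3 := by have := dist_pos.mpr hpq; positivity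
  have hpiece : ∀ x y : Y, dist x y = dist p q →
      ∃ Q ⊆ closedBall x (dist p q / 3), IsSubcontinuum Q ∧ (interior Q).Nonempty :=
    fun x y hxy ↦ hY.exists_subcontinuum_interior_nonempty isClosed_closedBall
      (ne_univ_iff_exists_notMem _ |>.mpr ⟨y, by rw [mem_closedBall, dist_comm]; linarith⟩)
      ⟨x, ball_subset_interior_closedBall (mem_ball_self hr)⟩
  obtain ⟨A, hAp, hA, u, hu⟩ := hpiece p q rfl
  obtain ⟨B, hBq, hB, v, hv⟩ := hpiece q p (dist_comm q p)
  obtain ⟨σ, hσ, huA⟩ := isOpen_iff.mp isOpen_interior u hu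
  obtain ⟨τ, hτ, hvB⟩ := isOpen_iff.mp isOpen_interior v hv
  refine ⟨A, B, hA, hB, (closedBall_disjoint_closedBall (by linarith)).mono hAp hBq,
    min σ τ, lt_min hσ hτ, u, v, ?_, ?_⟩
  · exact (ball_subset_ball (min_le_left σ τ)).trans (huA.trans interior_subset)
  · exact (ball_subset_ball (min_le_right σ τ)).trans (hvB.trans interior_subset)

/-- Let `Y` be a hereditarily unicoherent Suslinian continuum with metric `d`.
Then there exists `ε > 0` such that every two `ε`-dense subcontinua of `Y` intersect.

Here a subcontinuum of `Y` is a compact connected subset with more than one point; `Y` is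
hereditarily unicoherent if the intersection of every two intersecting subcontinua is connected;
`Y` is Suslinian if every pairwise disjoint collection of subcontinua is countable; a set is
`ε`-dense if it meets every open ball of radius `ε`. -/
theorem stmt_0 {Y : Type*} [MetricSpace Y] [CompactSpace Y] [ConnectedSpace Y] [Nontrivial Y]
    (hHU : ∀ H K : Set Y,
      IsCompact H → IsConnected H → H.Nontrivial →
      IsCompact K → IsConnected K → K.Nontrivial →
      (H ∩ K).Nonempty → IsConnected (H ∩ K))
    (hSus : ∀ C : Set (Set Y),
      (∀ S ∈ C, IsCompact S ∧ IsConnected S ∧ S.Nontrivial) →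
      C.Pairwise Disjoint → C.Countable) :
    ∃ ε > (0 : ℝ), ∀ E₀ E₁ : Set Y,
      IsCompact E₀ → IsConnected E₀ → E₀.Nontrivial →
      IsCompact E₁ → IsConnected E₁ → E₁.Nontrivial →
      (∀ y : Y, ∃ e ∈ E₀, dist e y < ε) →
      (∀ y : Y, ∃ e ∈ E₁, dist e y < ε) →
      (E₀ ∩ E₁).Nonempty := by
  obtain ⟨A, B, hA, hB, hAB, ε, hε, u, v, huA, hvB⟩ :=
    IsSuslinian.exists_disjoint_subcontinua_ball_subset hSus
  refine ⟨ε, hε, fun E₀ E₁ hc₀ hconn₀ hnt₀ hc₁ hconn₁ hnt₁ hd₀ hd₁ ↦ ?_⟩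
  have hmeets : ∀ E : Set Y, (∀ y : Y, ∃ e ∈ E, dist e y < ε) →
      ∀ {S : Set Y} (c : Y), ball c ε ⊆ S → (E ∩ S).Nonempty := fun E hE S c hS ↦
    let ⟨e, he, hec⟩ := hE c; ⟨e, he, hS hec⟩
  exact IsHereditarilyUnicoherent.inter_nonempty
    (fun H K hH hK ↦ hHU H K hH.1 hH.2.1 hH.2.2 hK.1 hK.2.1 hK.2.2)
    hA hB hAB ⟨hc₀, hconn₀, hnt₀⟩ ⟨hc₁, hconn₁, hnt₁⟩
    (hmeets E₀ hd₀ u huA) (hmeets E₀ hd₀ v hvB) (hmeets E₁ hd₁ u huA) (hmeets E₁ hd₁ v hvB)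
end

section
/- Let X be a separable metrizable indecomposable semicontinuum with more than one point. Then there exists a sequence (K_n)_{n<ω} of pairwise disjoint proper subcontinua of X which converges to X in the Vietoris topology; that is, for every finite collection U_1, …, U_k of nonempty open subsets of X there exists N such that for all n ≥ N and all i ≤ k, K_n ∩ U_i ≠ ∅. -/
/-!
If `X` is compact, it is a Baire space, and the points lying in a proper subcontinuum that meets a
given proper subcontinuum `L` form a meagre set, since proper subcontinua of an indecomposable
space are nowhere dense. So at each stage one picks a point outside these sets for the finitely
many subcontinua already chosen, and takes as the next set a union of proper subcontinua through
that point, one reaching into each of the first `n` basic open sets; by indecomposability this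
finite union is still proper.

If `X` is not compact, every subcontinuum is proper. Given a continuum `M` containing the sets
chosen so far, some `z ∉ M` is such that the compact connected sets through `z` missing `M` reach
each of finitely many given open sets: otherwise `X` would be covered by finitely many proper
closed connected sets through a point of `M`, namely closures of `M` together with such sets,
which accumulate on `M` by boundary bumping. Finitely many of them form the next set, and `M` is
enlarged to contain it.

In both cases the `n`-th set meets the first `n` sets of a countable basis, which gives
convergence to `X` in the Vietoris topology.
-/

open Set Filter Function Topology TopologicalSpace

section General

variable {X : Type*} [TopologicalSpace X]

theorem IsClosed.connectedComponentIn {F : Set X} (hF : IsClosed F) (x : X) :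
    IsClosed (connectedComponentIn F x) := by
  refine isClosed_of_closure_subset ?_
  by_cases hx : x ∈ F
  · exact isPreconnected_connectedComponentIn.closure.subset_connectedComponentIn
      (subset_closure (mem_connectedComponentIn hx))
      (closure_minimal (connectedComponentIn_subset F x) hF)
  · simp [connectedComponentIn_eq_empty hx]

theorem IsCompact.exists_isOpen_isClosed_inter_disjoint [T2Space X] {A F : Set X}
    (hA : IsCompact A) (hF : IsClosed F) {x : X} (hx : x ∈ A)
    (h : Disjoint (connectedComponentIn A x) F) :
    ∃ O, IsOpen O ∧ x ∈ O ∧ IsClosed (A ∩ O) ∧ Disjoint (A ∩ O) F := by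
  have := isCompact_iff_compactSpace.mp hA
  have hcomp : Disjoint (connectedComponent (⟨x, hx⟩ : A)) (Subtype.val ⁻¹' F) :=
    Set.disjoint_left.2 fun a ha haF =>
      Set.disjoint_left.1 h (connectedComponentIn_eq_image hx ▸ mem_image_of_mem _ ha) haF
  rw [connectedComponent_eq_iInter_isClopen, disjoint_iff_inter_eq_empty, inter_comm] at hcomp
  obtain ⟨u, hu⟩ := (hF.preimage continuous_subtype_val).isCompact.elim_finite_subfamily_closed
    _ (fun Z => Z.2.1.isClosed) hcomp
  have hZ : IsClopen (⋂ Z ∈ u, (Z : Set A)) := isClopen_biInter_finset fun Z _ => Z.2.1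
  obtain ⟨O, hO, hOZ⟩ := isOpen_induced_iff.mp hZ.isOpen
  have hAO : A ∩ O = Subtype.val '' ⋂ Z ∈ u, (Z : Set A) := by
    rw [← hOZ, Subtype.image_preimage_coe]
  refine ⟨O, hO, ?_, hAO ▸ (hZ.isClosed.isCompact.image continuous_subtype_val).isClosed, ?_⟩
  · have hxZ : (⟨x, hx⟩ : A) ∈ ⋂ Z ∈ u, (Z : Set A) := mem_iInter₂.2 fun Z _ => Z.2.2
    exact (hAO ▸ mem_image_of_mem Subtype.val hxZ : x ∈ A ∩ O).2
  · rw [hAO, Set.disjoint_left]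
    rintro _ ⟨a, ha, rfl⟩ haF
    exact (hu ▸ ⟨haF, ha⟩ : a ∈ (∅ : Set A))

/-- The boundary bumping theorem. -/
theorem connectedComponentIn_inter_closure_diff_nonempty [T2Space X] {N A : Set X}
    (hN : IsCompact N) (hNc : IsPreconnected N) (hA : IsClosed A) (hAN : A ⊂ N) {x : X}
    (hx : x ∈ A) : (connectedComponentIn A x ∩ closure (N \ A)).Nonempty := by
  rw [← not_disjoint_iff_nonempty_inter]
  intro h
  obtain ⟨O, hO, hxO, hAO, hdisj⟩ :=
    (hN.of_isClosed_subset hA hAN.subset).exists_isOpen_isClosed_inter_disjoint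
      isClosed_closure hx h
  have hcover : N ⊆ (A ∩ O) ∪ (closure (N \ A) ∪ A \ O) := fun y hy => by
    by_cases hyA : y ∈ A
    · by_cases hyO : y ∈ O
      exacts [Or.inl ⟨hyA, hyO⟩, Or.inr (Or.inr ⟨hyA, hyO⟩)]
    · exact Or.inr (Or.inl (subset_closure ⟨hy, hyA⟩))
  have hsep : N ∩ ((A ∩ O) ∩ (closure (N \ A) ∪ A \ O)) = ∅ := by
    rw [inter_union_distrib_left, hdisj.inter_eq, empty_union]
    exact eq_empty_of_forall_notMem fun y ⟨_, ⟨_, hyO⟩, _, hyO'⟩ => hyO' hyO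
  rcases isPreconnected_iff_subset_of_disjoint_closed.1 hNc _ _ hAO
    (isClosed_closure.union (hA.sdiff hO)) hcover hsep with hNA | hNA
  · exact hAN.not_subset (hNA.trans inter_subset_left)
  · rcases hNA (hAN.subset hx) with hx' | ⟨-, hx'⟩
    exacts [Set.disjoint_left.1 hdisj ⟨hx, hxO⟩ hx', hx' hxO]

end General

section Joined

variable {X : Type*} [TopologicalSpace X]

def IsCompactlyJoined (X : Type*) [TopologicalSpace X] : Prop :=
  ∀ x y : X, ∃ K : Set X, IsCompact K ∧ IsPreconnected K ∧ x ∈ K ∧ y ∈ K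

theorem IsCompactlyJoined.exists_subset_inter_frontier_nonempty [T2Space X]
    (hX : IsCompactlyJoined X) {A : Set X} (hA : IsClosed A) (hAu : A ≠ univ) {x : X}
    (hx : x ∈ A) :
    ∃ C, IsCompact C ∧ IsPreconnected C ∧ x ∈ C ∧ C ⊆ A ∧ (C ∩ frontier A).Nonempty := by
  obtain ⟨y, hy⟩ := (ne_univ_iff_exists_notMem A).1 hAu
  obtain ⟨L, hL, hLc, hxL, hyL⟩ := hX x y
  have hAL : A ∩ L ⊂ L := ssubset_of_subset_not_subset inter_subset_right fun h => hy (h hyL).1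
  obtain ⟨w, hwC, hw⟩ := connectedComponentIn_inter_closure_diff_nonempty hL hLc
    (hA.inter hL.isClosed) hAL ⟨hx, hxL⟩
  have hCA : connectedComponentIn (A ∩ L) x ⊆ A ∩ L := connectedComponentIn_subset _ _
  have hwA : w ∈ closure Aᶜ := closure_mono (fun v hv hvA => hv.2 ⟨hvA, hv.1⟩) hw
  refine ⟨connectedComponentIn (A ∩ L) x,
    hL.of_isClosed_subset ((hA.inter hL.isClosed).connectedComponentIn x)
      (hCA.trans inter_subset_right), isPreconnected_connectedComponentIn,
    mem_connectedComponentIn ⟨hx, hxL⟩, hCA.trans inter_subset_left, w, hwC, ?_⟩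
  rw [closure_compl] at hwA
  rw [hA.frontier_eq]
  exact ⟨(hCA hwC).1, hwA⟩

theorem IsCompactlyJoined.exists_nontrivial_subset_of_mem_nhds [T3Space X]
    (hX : IsCompactlyJoined X) {z : X} {U : Set X} (hU : U ∈ 𝓝 z) (hUu : U ≠ univ) :
    ∃ C, IsCompact C ∧ IsPreconnected C ∧ C.Nontrivial ∧ z ∈ C ∧ C ⊆ U := by
  obtain ⟨t, htz, ht, htU⟩ := exists_mem_nhds_isClosed_subset hU
  obtain ⟨C, hC, hCc, hzC, hCt, w, hwC, hw⟩ := hX.exists_subset_inter_frontier_nonempty ht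
    (fun h => hUu (eq_univ_of_univ_subset (h ▸ htU))) (mem_of_mem_nhds htz)
  refine ⟨C, hC, hCc, ⟨z, hzC, w, hwC, ?_⟩, hzC, hCt.trans htU⟩
  rintro rfl
  exact hw.2 (mem_interior_iff_mem_nhds.2 htz)

theorem IsCompactlyJoined.exists_nontrivial_ne_univ_inter_nonempty [T3Space X] [Nontrivial X]
    (hX : IsCompactlyJoined X) (x : X) {V : Set X} (hV : IsOpen V) (hVne : V.Nonempty) :
    ∃ L, IsCompact L ∧ IsPreconnected L ∧ L.Nontrivial ∧ L ≠ univ ∧ x ∈ L ∧ (L ∩ V).Nonempty := by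
  by_cases hxV : x ∈ V
  · obtain ⟨y, hyx⟩ := exists_ne x
    obtain ⟨C, hC, hCc, hCnt, hxC, hCV⟩ := hX.exists_nontrivial_subset_of_mem_nhds
      (inter_mem (hV.mem_nhds hxV) (isOpen_compl_singleton.mem_nhds hyx.symm))
      ((ne_univ_iff_exists_notMem _).2 ⟨y, fun h => h.2 rfl⟩)
    exact ⟨C, hC, hCc, hCnt, (ne_univ_iff_exists_notMem _).2 ⟨y, fun h => (hCV h).2 rfl⟩, hxC,
      x, hxC, hxV⟩
  · -- bump from `x` into a closed neighbourhood `t` of a point `y ∈ V`, with `x ∉ t`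
    obtain ⟨y, hyV⟩ := hVne
    have hyx : y ≠ x := fun h => hxV (h ▸ hyV)
    obtain ⟨t, hty, ht, htV⟩ := exists_mem_nhds_isClosed_subset
      (inter_mem (hV.mem_nhds hyV) (isOpen_compl_singleton.mem_nhds hyx))
    have hyt : y ∉ (interior t)ᶜ := not_not.2 (mem_interior_iff_mem_nhds.2 hty)
    obtain ⟨C, hC, hCc, hxC, hCt, w, hwC, hw⟩ := hX.exists_subset_inter_frontier_nonempty
      isOpen_interior.isClosed_compl ((ne_univ_iff_exists_notMem _).2 ⟨y, hyt⟩)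
      (fun h => (htV (interior_subset h)).2 rfl)
    have hwt : w ∈ t := by
      rw [frontier_compl] at hw
      exact closure_minimal interior_subset ht (frontier_subset_closure hw)
    refine ⟨C, hC, hCc, ⟨x, hxC, w, hwC, ?_⟩,
      (ne_univ_iff_exists_notMem _).2 ⟨y, fun h => hyt (hCt h)⟩,
      hxC, w, hwC, (htV hwt).1⟩
    rintro rfl
    exact (htV hwt).2 rfl

theorem IsCompactlyJoined.exists_isCompact_isPreconnected_superset (hX : IsCompactlyJoined X)
    {A B : Set X} (hA : IsCompact A) (hAc : IsPreconnected A) (hAne : A.Nonempty)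
    (hB : IsCompact B) (hBc : IsPreconnected B) (hBne : B.Nonempty) :
    ∃ M, IsCompact M ∧ IsPreconnected M ∧ A ⊆ M ∧ B ⊆ M := by
  obtain ⟨a, ha⟩ := hAne
  obtain ⟨b, hb⟩ := hBne
  obtain ⟨J, hJ, hJc, haJ, hbJ⟩ := hX a b
  exact ⟨A ∪ J ∪ B, (hA.union hJ).union hB,
    (hAc.union a ha haJ hJc).union b (Or.inr hbJ) hb hBc,
    subset_union_left.trans subset_union_left, subset_union_right⟩

def continuumComponentIn (S : Set X) (z : X) : Set X :=
  ⋃₀ {L | IsCompact L ∧ IsPreconnected L ∧ L ⊆ S ∧ z ∈ L}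

theorem subset_continuumComponentIn {S L : Set X} {z : X} (hL : IsCompact L)
    (hLc : IsPreconnected L) (hLS : L ⊆ S) (hz : z ∈ L) : L ⊆ continuumComponentIn S z :=
  subset_sUnion_of_mem ⟨hL, hLc, hLS, hz⟩

theorem mem_continuumComponentIn {S : Set X} {z : X} (hz : z ∈ S) :
    z ∈ continuumComponentIn S z :=
  subset_continuumComponentIn isCompact_singleton isPreconnected_singleton
    (singleton_subset_iff.2 hz) rfl rfl

theorem isPreconnected_continuumComponentIn {S : Set X} {z : X} :
    IsPreconnected (continuumComponentIn S z) :=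
  isPreconnected_sUnion z _ (fun _ hL => hL.2.2.2) fun _ hL => hL.2.1

theorem IsCompactlyJoined.inter_closure_continuumComponentIn_compl_nonempty [T4Space X]
    (hX : IsCompactlyJoined X) {M : Set X} (hM : IsClosed M) (hMne : M.Nonempty) {z : X}
    (hz : z ∉ M) : (M ∩ closure (continuumComponentIn Mᶜ z)).Nonempty := by
  rw [← not_disjoint_iff_nonempty_inter]
  intro h
  -- bump from `z` out of the complement of a neighbourhood `U` of `M` whose closure misses the
  -- closure of the component: the bumped set lies in the component yet reaches `closure U`
  obtain ⟨U, hU, hMU, hUS⟩ := normal_exists_closure_subset hM isClosed_closure.isOpen_compl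
    (subset_compl_iff_disjoint_right.2 h)
  have hzU : z ∈ Uᶜ := fun hzU =>
    hUS (subset_closure hzU) (subset_closure (mem_continuumComponentIn hz))
  obtain ⟨m, hm⟩ := hMne
  obtain ⟨C, hC, hCc, hzC, hCU, w, hwC, hw⟩ := hX.exists_subset_inter_frontier_nonempty
    hU.isClosed_compl ((ne_univ_iff_exists_notMem _).2 ⟨m, not_not.2 (hMU hm)⟩) hzU
  rw [frontier_compl] at hw
  have hCS : C ⊆ continuumComponentIn Mᶜ z :=
    subset_continuumComponentIn hC hCc (hCU.trans (compl_subset_compl.2 hMU)) hzC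
  exact hUS (frontier_subset_closure hw) (subset_closure (hCS hwC))

theorem IsCompactlyJoined.isPreconnected_union_continuumComponentIn_compl [T4Space X]
    (hX : IsCompactlyJoined X) {M : Set X} (hM : IsClosed M) (hMc : IsPreconnected M)
    (hMne : M.Nonempty) {z : X} (hz : z ∉ M) :
    IsPreconnected (M ∪ continuumComponentIn Mᶜ z) := by
  obtain ⟨m, hmM, hmS⟩ := hX.inter_closure_continuumComponentIn_compl_nonempty hM hMne hz
  have hS : IsPreconnected (insert m (continuumComponentIn Mᶜ z)) :=
    isPreconnected_continuumComponentIn.subset_closure (subset_insert _ _)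
      (insert_subset hmS subset_closure)
  have := hMc.union m hmM (mem_insert _ _) hS
  rwa [union_insert, Set.insert_eq_of_mem (mem_union_left _ hmM)] at this

end Joined

section Indecomposable

variable {X : Type*} [TopologicalSpace X]

theorem IsPreconnected.union_of_union_union_eq_univ [PreconnectedSpace X] {C E E' : Set X}
    (hCc : IsPreconnected C) (hC : IsClosed C) (hE : IsClosed E) (hE' : IsClosed E')
    (hEE' : Disjoint E E') (hcover : C ∪ E ∪ E' = univ) : IsPreconnected (C ∪ E) := by
  rw [isPreconnected_iff_subset_of_disjoint_closed]
  intro u v hu hv hsub hdisj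
  wlog hCu : C ⊆ u generalizing u v
  · have hCv : C ⊆ v := by
      refine (isPreconnected_iff_subset_of_disjoint_closed.1 hCc u v hu hv
        (subset_union_left.trans hsub) ?_).resolve_left hCu
      exact subset_empty_iff.1 (hdisj ▸ inter_subset_inter_left _ subset_union_left)
    exact (this v u hv hu (union_comm u v ▸ hsub) (inter_comm u v ▸ hdisj) hCv).symm
  -- the part of `C ∪ E` in `v` lies in `E`, so it is also the complement of a closed set
  have hcompl : ((C ∪ E) ∩ v)ᶜ = (C ∪ E) ∩ u ∪ E' := by
    ext x
    have h1 := hcover.symm ▸ mem_univ x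
    have h2 := @hsub x
    have h3 : x ∈ E → x ∉ E' := fun h => Set.disjoint_left.1 hEE' h
    have h4 : x ∉ (C ∪ E) ∩ (u ∩ v) := fun hx => (hdisj ▸ hx : x ∈ (∅ : Set X))
    have h5 := @hCu x
    simp only [mem_compl_iff, mem_inter_iff, mem_union] at h1 h2 h4 ⊢
    tauto
  have hR : IsClopen ((C ∪ E) ∩ v) :=
    ⟨(hC.union hE).inter hv, isClosed_compl_iff.1 (hcompl ▸ ((hC.union hE).inter hu).union hE')⟩
  rcases isClopen_iff.1 hR with h | h
  · exact Or.inl fun x hx => (hsub hx).resolve_right fun hxv => (h ▸ ⟨hx, hxv⟩ : x ∈ (∅ : Set X))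
  · exact Or.inr fun x _ => (h.symm ▸ mem_univ x : x ∈ (C ∪ E) ∩ v).2

def IsIndecomposable (X : Type*) [TopologicalSpace X] : Prop :=
  ¬ ∃ A B : Set X, IsClosed A ∧ IsConnected A ∧ A ≠ univ ∧
    IsClosed B ∧ IsConnected B ∧ B ≠ univ ∧ A ∪ B = univ

namespace IsIndecomposable

theorem union_ne_univ (hX : IsIndecomposable X) {A B : Set X} (hA : IsClosed A)
    (hAc : IsPreconnected A) (hAne : A.Nonempty) (hAu : A ≠ univ) (hB : IsClosed B)
    (hBc : IsPreconnected B) (hBu : B ≠ univ) : A ∪ B ≠ univ := by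
  intro hAB
  rcases B.eq_empty_or_nonempty with rfl | hBne
  · exact hAu (by simpa using hAB)
  · exact hX ⟨A, B, hA, ⟨hAne, hAc⟩, hAu, hB, ⟨hBne, hBc⟩, hBu, hAB⟩

theorem iUnion_ne_univ (hX : IsIndecomposable X) {ι : Type*} [Finite ι] {A : ι → Set X}
    {x : X} (hA : ∀ i, IsClosed (A i)) (hAc : ∀ i, IsPreconnected (A i))
    (hAu : ∀ i, A i ≠ univ) (hx : ∀ i, x ∈ A i) : (⋃ i, A i) ≠ univ := by
  classical
  cases nonempty_fintype ι
  suffices ∀ t : Finset ι, (⋃ i ∈ t, A i) ≠ univ by simpa using this Finset.univ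
  intro t
  induction t using Finset.induction_on with
  | empty => simpa using (ne_univ_iff_exists_notMem (∅ : Set X)).2 ⟨x, id⟩
  | insert a t _ ih =>
    rw [Finset.set_biUnion_insert]
    refine hX.union_ne_univ (hA a) (hAc a) ⟨x, hx a⟩ (hAu a)
      (t.finite_toSet.isClosed_biUnion fun i _ => hA i) ?_ ih
    exact isPreconnected_of_forall x fun y hy => by
      obtain ⟨i, hi, hyi⟩ := mem_iUnion₂.1 hy
      exact ⟨A i, subset_biUnion_of_mem hi, hx i, hyi, hAc i⟩

theorem interior_eq_empty [PreconnectedSpace X] (hX : IsIndecomposable X) {C : Set X}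
    (hC : IsClosed C) (hCc : IsPreconnected C) (hCu : C ≠ univ) : interior C = ∅ := by
  rcases C.eq_empty_or_nonempty with rfl | hCne
  · exact interior_empty
  by_contra hint
  set D := closure Cᶜ
  have hD : IsClosed D := isClosed_closure
  have hcover : C ∪ D = univ :=
    eq_univ_of_forall fun x => (em (x ∈ C)).imp id fun h => subset_closure h
  have hDu : D ≠ univ := by
    rw [show D = (interior C)ᶜ from closure_compl, Ne, compl_eq_comm, compl_univ]
    exact Ne.symm hint
  by_cases hDc : IsPreconnected D
  · exact hX.union_ne_univ hC hCc hCne hCu hD hDc hDu hcover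
  -- split `D` into two closed pieces; `C` together with either piece is proper and preconnected
  obtain ⟨u, v, hu, hv, hDuv, hDsep, hDu', hDv'⟩ : ∃ u v, IsClosed u ∧ IsClosed v ∧
      D ⊆ u ∪ v ∧ D ∩ (u ∩ v) = ∅ ∧ ¬ D ⊆ u ∧ ¬ D ⊆ v := by
    simpa [isPreconnected_iff_subset_of_disjoint_closed] using hDc
  have piece : ∀ u v, IsClosed u → IsClosed v → D ⊆ u ∪ v → D ∩ (u ∩ v) = ∅ → ¬ D ⊆ u →
      IsPreconnected (C ∪ D ∩ u) ∧ C ∪ D ∩ u ≠ univ := by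
    intro u v hu hv hDuv hDsep hDu'
    refine ⟨hCc.union_of_union_union_eq_univ (E' := D ∩ v) hC (hD.inter hu) (hD.inter hv) ?_ ?_,
      ?_⟩
    · rw [Set.disjoint_iff_inter_eq_empty, inter_inter_inter_comm, inter_self, hDsep]
    · rw [union_assoc, ← inter_union_distrib_left, inter_eq_left.2 hDuv, hcover]
    · obtain ⟨p, hpD, hpu⟩ := not_subset.1 hDu'
      obtain ⟨w, hwu, hwC⟩ := mem_closure_iff.1 hpD uᶜ hu.isOpen_compl hpu
      exact (ne_univ_iff_exists_notMem _).2 ⟨w, fun h => h.elim hwC fun h => hwu h.2⟩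
  obtain ⟨hU, hUu⟩ := piece u v hu hv hDuv hDsep hDu'
  obtain ⟨hV, hVu⟩ := piece v u hv hu (union_comm u v ▸ hDuv) (inter_comm u v ▸ hDsep) hDv'
  refine hX.union_ne_univ (hC.union (hD.inter hu)) hU (hCne.mono subset_union_left) hUu
    (hC.union (hD.inter hv)) hV hVu ?_
  rw [← union_union_distrib_left, ← inter_union_distrib_left, inter_eq_left.2 hDuv, hcover]

/-- The points joined to `L` by a proper closed preconnected set lie in the countably many
nowhere dense sets `connectedComponentIn Bᶜ z`, `B` running over a countable basis. -/
theorem eventually_residual_disjoint [SecondCountableTopology X] [PreconnectedSpace X]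
    (hX : IsIndecomposable X) {L : Set X} (hL : IsClosed L) (hLc : IsPreconnected L)
    (hLne : L.Nonempty) (hLu : L ≠ univ) :
    ∀ᶠ x in residual X, ∀ J, IsClosed J → IsPreconnected J → J ≠ univ → x ∈ J → Disjoint J L := by
  obtain ⟨z, hz⟩ := hLne
  obtain ⟨b, hbc, hbe, hb⟩ := exists_countable_basis X
  have hD : ∀ B ∈ b, ∀ᶠ x in residual X, x ∉ connectedComponentIn Bᶜ z := by
    intro B hB
    have hD : IsClosed (connectedComponentIn Bᶜ z) :=
      (hb.isOpen hB).isClosed_compl.connectedComponentIn z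
    refine residual_of_dense_open hD.isOpen_compl (interior_eq_empty_iff_dense_compl.1 ?_)
    refine hX.interior_eq_empty hD isPreconnected_connectedComponentIn fun h => ?_
    obtain ⟨y, hy⟩ := nonempty_iff_ne_empty.2 fun h' => hbe (h' ▸ hB)
    exact (connectedComponentIn_subset _ _ (h ▸ mem_univ y) : y ∈ Bᶜ) hy
  filter_upwards [(eventually_countable_ball hbc).2 hD] with x hx J hJ hJc hJu hxJ
  by_contra hJL
  rw [not_disjoint_iff_nonempty_inter] at hJL
  obtain ⟨p, hp⟩ := (ne_univ_iff_exists_notMem _).1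
    (hX.union_ne_univ hJ hJc ⟨x, hxJ⟩ hJu hL hLc hLu)
  obtain ⟨B, hB, hpB, hBJL⟩ := hb.exists_subset_of_mem_open hp (hJ.union hL).isOpen_compl
  exact hx B hB <| (hJc.union' hJL hLc).subset_connectedComponentIn (Or.inr hz)
    (subset_compl_comm.1 hBJL) (Or.inl hxJ)

theorem exists_continuumComponentIn_compl_inter_nonempty [T4Space X] [PreconnectedSpace X]
    (hX : IsIndecomposable X) (hJ : IsCompactlyJoined X) {M : Set X} (hM : IsClosed M)
    (hMc : IsPreconnected M) (hMne : M.Nonempty) (hMu : M ≠ univ) {ι : Type*} [Finite ι]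
    (V : ι → Set X) (hV : ∀ i, IsOpen (V i)) (hVne : ∀ i, (V i).Nonempty) :
    ∃ z ∉ M, ∀ i, (continuumComponentIn Mᶜ z ∩ V i).Nonempty := by
  -- otherwise the closures `A i` of the unions of `M` with the components missing `V i` would be
  -- finitely many proper closed connected sets through a point of `M` covering `X`
  by_contra! hmiss
  obtain ⟨z₀, hz₀⟩ := (ne_univ_iff_exists_notMem _).1 hMu
  obtain ⟨i₀, -⟩ := hmiss z₀ hz₀
  have : Nonempty ι := ⟨i₀⟩
  choose! miss hmiss using hmiss
  obtain ⟨x₀, hx₀⟩ := hMne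
  set A : ι → Set X := fun i => closure (M ∪ ⋃ z ∈ {z | z ∉ M ∧ miss z = i},
    continuumComponentIn Mᶜ z)
  have hAc : ∀ i, IsPreconnected (A i) := fun i => IsPreconnected.closure <|
    isPreconnected_of_forall x₀ fun y hy => by
      rcases hy with hy | hy
      · exact ⟨M, subset_union_left, hx₀, hy, hMc⟩
      obtain ⟨z, hz, hyz⟩ := mem_iUnion₂.1 hy
      exact ⟨M ∪ continuumComponentIn Mᶜ z, union_subset_union_right _ (subset_biUnion_of_mem hz),
        Or.inl hx₀, Or.inr hyz,
        hJ.isPreconnected_union_continuumComponentIn_compl hM hMc ⟨x₀, hx₀⟩ hz.1⟩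
  have hAu : ∀ i, A i ≠ univ := by
    intro i hAi
    have hVM : (V i \ M).Nonempty := sdiff_nonempty.2 fun h => (hVne i).ne_empty <|
      subset_empty_iff.1 (hX.interior_eq_empty hM hMc hMu ▸ interior_maximal h (hV i))
    obtain ⟨w, hw, hwV, hwM⟩ := (dense_iff_closure_eq.2 hAi).exists_mem_open
      ((hV i).sdiff hM) hVM
    rcases hw with hw | hw
    · exact hwM hw
    obtain ⟨z, ⟨hzM, rfl⟩, hwz⟩ := mem_iUnion₂.1 hw
    exact (hmiss z hzM ▸ ⟨hwz, hwV⟩ : w ∈ (∅ : Set X))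
  refine hX.iUnion_ne_univ (fun i => isClosed_closure) hAc hAu
    (fun i => subset_closure (Or.inl hx₀)) (eq_univ_of_forall fun w => mem_iUnion.2 ?_)
  by_cases hwM : w ∈ M
  · exact ⟨i₀, subset_closure (Or.inl hwM)⟩
  · refine ⟨miss w, subset_closure (Or.inr (mem_iUnion₂.2 ⟨w, ⟨hwM, rfl⟩, ?_⟩))⟩
    exact mem_continuumComponentIn hwM

end IsIndecomposable

end Indecomposable

section Sequence

theorem exists_pairwise_disjoint_of_forall_exists {α : Type*} (R : ℕ → Set α → Prop)
    (Inv : Set α → Prop) (h₀ : Inv ∅)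
    (hstep : ∀ W, Inv W → ∀ n, ∃ K, R n K ∧ Disjoint K W ∧ Inv (W ∪ K)) :
    ∃ K : ℕ → Set α, (∀ n, R n (K n)) ∧ Pairwise (Disjoint on K) := by
  choose next hR hdisj hInv using hstep
  let W : ℕ → {W // Inv W} :=
    fun n => Nat.rec ⟨∅, h₀⟩ (fun n W => ⟨W.1 ∪ next W.1 W.2 n, hInv _ _ _⟩) n
  have hW : Monotone fun n => (W n).1 := monotone_nat_of_le_succ fun _ => subset_union_left
  refine ⟨fun n => next (W n).1 (W n).2 n, fun n => hR _ _ _,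
    (pairwise_disjoint_on _).2 fun m n hmn => ?_⟩
  exact (hdisj _ _ n).symm.mono_left (subset_union_right.trans (hW hmn))

variable {X : Type*} [TopologicalSpace X]

def VietorisTendstoUniv (K : ℕ → Set X) : Prop :=
  ∀ (k : ℕ) (U : Fin k → Set X), (∀ i, IsOpen (U i) ∧ (U i).Nonempty) →
    ∃ N, ∀ n ≥ N, ∀ i, (K n ∩ U i).Nonempty

theorem exists_seq_isOpen_nonempty_subset [SecondCountableTopology X] [Nonempty X] :
    ∃ f : ℕ → Set X, (∀ j, IsOpen (f j)) ∧ (∀ j, (f j).Nonempty) ∧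
      ∀ U, IsOpen U → U.Nonempty → ∃ j, f j ⊆ U := by
  obtain ⟨b, hbc, hbe, hb⟩ := exists_countable_basis X
  obtain ⟨B, hB, -⟩ := hb.exists_subset_of_mem_open (mem_univ (Classical.arbitrary X)) isOpen_univ
  obtain ⟨f, rfl⟩ := hbc.exists_eq_range ⟨B, hB⟩
  refine ⟨f, fun j => hb.isOpen (mem_range_self j),
    fun j => nonempty_iff_ne_empty.2 fun h => hbe (h ▸ mem_range_self j), ?_⟩
  rintro U hU ⟨x, hx⟩
  obtain ⟨_, ⟨j, rfl⟩, -, hj⟩ := hb.exists_subset_of_mem_open hx hU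
  exact ⟨j, hj⟩

theorem vietorisTendstoUniv_of_forall_le {K f : ℕ → Set X}
    (hf : ∀ U, IsOpen U → U.Nonempty → ∃ j, f j ⊆ U)
    (hK : ∀ n, ∀ i ≤ n, (K n ∩ f i).Nonempty) : VietorisTendstoUniv K := by
  intro k U hU
  choose j hj using fun i => hf (U i) (hU i).1 (hU i).2
  exact eventually_atTop.1 <| eventually_all.2 fun i => (eventually_ge_atTop (j i)).mono
    fun n hn => (hK n (j i) hn).mono (inter_subset_inter_right _ (hj i))

theorem exists_seq_vietorisTendstoUniv [SecondCountableTopology X] [Nonempty X]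
    (P : Set X → Prop) (Inv : Set X → Prop) (h₀ : Inv ∅)
    (hstep : ∀ W, Inv W → ∀ (ι : Type) [Finite ι] [Nonempty ι] (V : ι → Set X),
      (∀ i, IsOpen (V i)) → (∀ i, (V i).Nonempty) →
      ∃ K, P K ∧ Disjoint K W ∧ (∀ i, (K ∩ V i).Nonempty) ∧ Inv (W ∪ K)) :
    ∃ K : ℕ → Set X, (∀ n, P (K n)) ∧ Pairwise (Disjoint on K) ∧ VietorisTendstoUniv K := by
  obtain ⟨f, hf, hfne, hfU⟩ := exists_seq_isOpen_nonempty_subset (X := X)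
  obtain ⟨K, hK, hdisj⟩ := exists_pairwise_disjoint_of_forall_exists
    (fun n K => P K ∧ ∀ i ≤ n, (K ∩ f i).Nonempty) Inv h₀ fun W hW n => by
      obtain ⟨K, hPK, hKW, hKf, hInv⟩ := hstep W hW (Fin (n + 1)) (fun i => f i) (fun i => hf i)
        fun i => hfne i
      exact ⟨K, ⟨hPK, fun i hi => hKf ⟨i, Nat.lt_succ_of_le hi⟩⟩, hKW, hInv⟩
  exact ⟨K, fun n => (hK n).1, hdisj, vietorisTendstoUniv_of_forall_le hfU fun n => (hK n).2⟩

end Sequence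

section ProperSubcontinua

variable {X : Type*} [TopologicalSpace X]

def IsProperSubcontinuum (K : Set X) : Prop :=
  IsCompact K ∧ IsConnected K ∧ K.Nontrivial ∧ K ≠ univ

namespace IsIndecomposable

theorem exists_isProperSubcontinuum_of_compactSpace [CompactSpace X] [T3Space X]
    [SecondCountableTopology X] [PreconnectedSpace X] [Nontrivial X] (hX : IsIndecomposable X)
    (hJ : IsCompactlyJoined X) {s : Set (Set X)} (hs : s.Finite)
    (hsL : ∀ L ∈ s, IsClosed L ∧ IsPreconnected L ∧ L.Nonempty ∧ L ≠ univ)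
    {ι : Type*} [Finite ι] [Nonempty ι] (V : ι → Set X) (hV : ∀ i, IsOpen (V i))
    (hVne : ∀ i, (V i).Nonempty) :
    ∃ K, IsProperSubcontinuum K ∧ (∀ L ∈ s, Disjoint K L) ∧ ∀ i, (K ∩ V i).Nonempty := by
  obtain ⟨x, hx⟩ := (dense_of_mem_residual <| (hs.eventually_all).2 fun L hL =>
    hX.eventually_residual_disjoint (hsL L hL).1 (hsL L hL).2.1 (hsL L hL).2.2.1
      (hsL L hL).2.2.2).nonempty
  choose C hC hCc hCnt hCu hxC hCV using
    fun i => hJ.exists_nontrivial_ne_univ_inter_nonempty x (hV i) (hVne i)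
  have i₀ := Classical.arbitrary ι
  refine ⟨⋃ i, C i, ⟨isCompact_iUnion hC, ⟨⟨x, mem_iUnion.2 ⟨i₀, hxC i₀⟩⟩,
    isPreconnected_iUnion ⟨x, mem_iInter.2 hxC⟩ hCc⟩, (hCnt i₀).mono (subset_iUnion C i₀),
    hX.iUnion_ne_univ (fun i => (hC i).isClosed) hCc hCu hxC⟩, fun L hL => ?_,
    fun i => (hCV i).mono (inter_subset_inter_left _ (subset_iUnion C i))⟩
  exact disjoint_iUnion_left.2 fun i => hx L hL (C i) (hC i).isClosed (hCc i) (hCu i) (hxC i)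

theorem exists_isProperSubcontinuum_of_not_compactSpace [T4Space X] [PreconnectedSpace X]
    (hX : IsIndecomposable X) (hJ : IsCompactlyJoined X) (hnc : ¬ CompactSpace X) {M : Set X}
    (hM : IsCompact M) (hMc : IsPreconnected M) (hMne : M.Nonempty) {ι : Type*} [Finite ι]
    (V : ι → Set X) (hV : ∀ i, IsOpen (V i)) (hVne : ∀ i, (V i).Nonempty) :
    ∃ K, IsProperSubcontinuum K ∧ Disjoint K M ∧ ∀ i, (K ∩ V i).Nonempty := by
  have hMu : M ≠ univ := fun h => hnc ⟨h ▸ hM⟩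
  obtain ⟨z, hzM, hzV⟩ := hX.exists_continuumComponentIn_compl_inter_nonempty hJ hM.isClosed hMc
    hMne hMu V hV hVne
  choose w hwS hwV using hzV
  choose L hL using fun i => mem_sUnion.1 (hwS i)
  obtain ⟨C, hC, hCc, hCnt, hzC, hCM⟩ := hJ.exists_nontrivial_subset_of_mem_nhds
    (hM.isClosed.isOpen_compl.mem_nhds hzM) (compl_ne_univ.2 hMne)
  have hK : IsCompact (C ∪ ⋃ i, L i) := hC.union (isCompact_iUnion fun i => (hL i).1.1)
  refine ⟨C ∪ ⋃ i, L i, ⟨hK, ⟨⟨z, Or.inl hzC⟩, ?_⟩, hCnt.mono subset_union_left,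
    fun h => hnc ⟨h ▸ hK⟩⟩, ?_, fun i => ⟨w i, Or.inr (mem_iUnion.2 ⟨i, (hL i).2⟩), hwV i⟩⟩
  · refine isPreconnected_of_forall z fun y hy => ?_
    rcases hy with hy | hy
    · exact ⟨C, subset_union_left, hzC, hy, hCc⟩
    obtain ⟨i, hyi⟩ := mem_iUnion.1 hy
    exact ⟨L i, (subset_iUnion L i).trans subset_union_right, (hL i).1.2.2.2, hyi, (hL i).1.2.1⟩
  · exact subset_compl_iff_disjoint_right.1
      (union_subset hCM (iUnion_subset fun i => (hL i).1.2.2.1))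

theorem exists_seq_of_compactSpace [CompactSpace X] [T3Space X] [SecondCountableTopology X]
    [PreconnectedSpace X] [Nontrivial X] (hX : IsIndecomposable X) (hJ : IsCompactlyJoined X) :
    ∃ K : ℕ → Set X, (∀ n, IsProperSubcontinuum (K n)) ∧ Pairwise (Disjoint on K) ∧
      VietorisTendstoUniv K := by
  refine exists_seq_vietorisTendstoUniv _ (fun W => ∃ s : Set (Set X), s.Finite ∧
    (∀ L ∈ s, IsClosed L ∧ IsPreconnected L ∧ L.Nonempty ∧ L ≠ univ) ∧ W ⊆ ⋃₀ s)
    ⟨∅, finite_empty, by simp, by simp⟩ ?_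
  rintro W ⟨s, hs, hsL, hWs⟩ ι _ _ V hV hVne
  obtain ⟨K, hK, hKs, hKV⟩ :=
    hX.exists_isProperSubcontinuum_of_compactSpace hJ hs hsL V hV hVne
  refine ⟨K, hK, (disjoint_sUnion_right.2 hKs).mono_right hWs, hKV, insert K s, hs.insert K,
    forall_mem_insert.2 ⟨⟨hK.1.isClosed, hK.2.1.2, hK.2.1.1, hK.2.2.2⟩, hsL⟩, ?_⟩
  exact union_subset (hWs.trans (sUnion_mono (subset_insert _ _)))
    (subset_sUnion_of_mem (mem_insert _ _))

theorem exists_seq_of_not_compactSpace [T4Space X] [SecondCountableTopology X]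
    [ConnectedSpace X] (hX : IsIndecomposable X) (hJ : IsCompactlyJoined X)
    (hnc : ¬ CompactSpace X) :
    ∃ K : ℕ → Set X, (∀ n, IsProperSubcontinuum (K n)) ∧ Pairwise (Disjoint on K) ∧
      VietorisTendstoUniv K := by
  obtain ⟨x⟩ : Nonempty X := inferInstance
  refine exists_seq_vietorisTendstoUniv _ (fun W => ∃ M : Set X, IsCompact M ∧ IsPreconnected M ∧
    M.Nonempty ∧ W ⊆ M) ⟨{x}, isCompact_singleton, isPreconnected_singleton,
      singleton_nonempty x, empty_subset _⟩ ?_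
  rintro W ⟨M, hM, hMc, hMne, hWM⟩ ι _ _ V hV hVne
  obtain ⟨K, hK, hKM, hKV⟩ :=
    hX.exists_isProperSubcontinuum_of_not_compactSpace hJ hnc hM hMc hMne V hV hVne
  obtain ⟨M', hM', hM'c, hMM', hKM'⟩ := hJ.exists_isCompact_isPreconnected_superset hM hMc hMne
    hK.1 hK.2.1.2 hK.2.1.1
  exact ⟨K, hK, hKM.mono_right hWM, hKV, M', hM', hM'c, hMne.mono hMM',
    union_subset (hWM.trans hMM') hKM'⟩

end IsIndecomposable

end ProperSubcontinua

/-- Let `X` be a separable metrizable indecomposable semicontinuum with more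
than one point. Then there exists a sequence of pairwise disjoint proper subcontinua of `X`
converging to `X` in the Vietoris topology: for every finite collection of nonempty open sets
`U 1, …, U k` there is `N` such that every `K n` with `n ≥ N` meets each `U i`. -/
theorem stmt_2 {X : Type*} [TopologicalSpace X] [TopologicalSpace.MetrizableSpace X]
    [TopologicalSpace.SeparableSpace X] [ConnectedSpace X] [Nontrivial X]
    (hsemi : ∀ x y : X, ∃ K : Set X,
      IsCompact K ∧ IsConnected K ∧ K.Nontrivial ∧ x ∈ K ∧ y ∈ K)
    (hindec : ¬ ∃ A B : Set X,
      IsClosed A ∧ IsConnected A ∧ A ≠ Set.univ ∧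
      IsClosed B ∧ IsConnected B ∧ B ≠ Set.univ ∧ A ∪ B = Set.univ) :
    ∃ K : ℕ → Set X,
      (∀ n, IsCompact (K n) ∧ IsConnected (K n) ∧ (K n).Nontrivial ∧ K n ≠ Set.univ) ∧
      (∀ m n, m ≠ n → Disjoint (K m) (K n)) ∧
      (∀ (k : ℕ) (U : Fin k → Set X), (∀ i, IsOpen (U i) ∧ (U i).Nonempty) →
        ∃ N, ∀ n ≥ N, ∀ i, (K n ∩ U i).Nonempty) := by
  have : SecondCountableTopology X := by
    let := metrizableSpaceMetric X
    exact UniformSpace.secondCountable_of_separable X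
  have hJ : IsCompactlyJoined X := fun x y =>
    let ⟨K, hK, hKc, _, hx, hy⟩ := hsemi x y
    ⟨K, hK, hKc.isPreconnected, hx, hy⟩
  by_cases hc : CompactSpace X
  · exact IsIndecomposable.exists_seq_of_compactSpace hindec hJ
  · exact IsIndecomposable.exists_seq_of_not_compactSpace hindec hJ hc
end

section
/- Let (Y,d) be a continuum and let X ⊆ Y be a dense subset such that X, with the subspace topology, is an indecomposable semicontinuum. Then there exists a sequence (X_n)_{n<ω} of pairwise disjoint subcontinua of Y with X_n ⊆ X for all n and d_H(X_n, Y) := sup_{y∈Y} d(y, X_n) → 0 as n → ∞. -/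
open Set Metric Topology Filter

namespace Stmt4Aux

/-- The indecomposability hypothesis. -/
def Indec (Z : Type*) [TopologicalSpace Z] : Prop :=
  ¬ ∃ A B : Set Z, IsClosed A ∧ IsConnected A ∧ A ≠ Set.univ ∧
      IsClosed B ∧ IsConnected B ∧ B ≠ Set.univ ∧ A ∪ B = Set.univ

/-- The semicontinuum hypothesis. -/
def Semic (Z : Type*) [TopologicalSpace Z] : Prop :=
  ∀ x y : Z, ∃ K : Set Z, IsCompact K ∧ IsConnected K ∧ K.Nontrivial ∧ x ∈ K ∧ y ∈ K

variable {Z : Type*} [MetricSpace Z]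

/-- Attaching one side of an open separation of the complement of a closed connected set
keeps it preconnected. -/
lemma attach [ConnectedSpace Z] {M P Q : Set Z} (hMc : IsPreconnected M)
    (hMne : M.Nonempty) (hP : IsOpen P) (hQ : IsOpen Q) (hdisj : P ∩ Q = ∅)
    (hcov : Mᶜ = P ∪ Q) : IsPreconnected (M ∪ P) := by
  have hQM : Q ⊆ Mᶜ := hcov ▸ subset_union_right
  have hPM : P ⊆ Mᶜ := hcov ▸ subset_union_left
  have hMP : M ∪ P = Qᶜ := by
    apply Subset.antisymm
    · rintro z (hz | hz) hzQ
      · exact hQM hzQ hz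
      · have : z ∈ P ∩ Q := ⟨hz, hzQ⟩
        rw [hdisj] at this
        exact this
    · intro z hz
      by_cases hzM : z ∈ M
      · exact Or.inl hzM
      · rcases (hcov ▸ hzM : z ∈ P ∪ Q) with h | h
        · exact Or.inr h
        · exact absurd h hz
  have key : ∀ u v : Set Z, IsClosed u → IsClosed v → M ∪ P ⊆ u ∪ v →
      (M ∪ P) ∩ (u ∩ v) = ∅ → M ⊆ u → ((M ∪ P) ∩ v).Nonempty → False := by
    intro u v hu hv hsub hemp hMu hnev
    have hFP : (M ∪ P) ∩ v ⊆ P := by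
      rintro z ⟨hzMP, hzv⟩
      rcases hzMP with hzM | hzP
      · have : z ∈ (M ∪ P) ∩ (u ∩ v) := ⟨Or.inl hzM, hMu hzM, hzv⟩
        rw [hemp] at this
        exact this.elim
      · exact hzP
    have hF_eq : (M ∪ P) ∩ v = P ∩ uᶜ := by
      apply Subset.antisymm
      · rintro z hz
        refine ⟨hFP hz, fun hzu => ?_⟩
        have : z ∈ (M ∪ P) ∩ (u ∩ v) := ⟨hz.1, hzu, hz.2⟩
        rw [hemp] at this
        exact this
      · rintro z ⟨hzP, hzu⟩
        rcases hsub (Or.inr hzP) with h | h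
        · exact absurd h hzu
        · exact ⟨Or.inr hzP, h⟩
    have hFclosed : IsClosed ((M ∪ P) ∩ v) := ((hMP ▸ hQ.isClosed_compl)).inter hv
    have hFopen : IsOpen ((M ∪ P) ∩ v) := hF_eq ▸ hP.inter hu.isOpen_compl
    rcases isClopen_iff.mp ⟨hFclosed, hFopen⟩ with h | h
    · rw [h] at hnev; exact hnev.ne_empty rfl
    · obtain ⟨m, hm⟩ := hMne
      have : m ∈ P := hFP (h ▸ mem_univ m)
      exact hPM this hm
  rw [isPreconnected_closed_iff]
  intro t t' ht ht' hsub hne1 hne2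
  by_contra hempty
  rw [not_nonempty_iff_eq_empty] at hempty
  have hMtt : M ⊆ t ∨ M ⊆ t' := by
    by_cases hMt' : (M ∩ t').Nonempty
    · by_cases hMt : (M ∩ t).Nonempty
      · obtain ⟨z, hz⟩ := isPreconnected_closed_iff.mp hMc t t' ht ht'
          ((subset_union_left).trans hsub) hMt hMt'
        have : z ∈ (M ∪ P) ∩ (t ∩ t') := ⟨Or.inl hz.1, hz.2⟩
        rw [hempty] at this
        exact this.elim
      · right
        intro z hz
        rcases hsub (Or.inl hz) with h | h
        · exact absurd ⟨z, hz, h⟩ hMt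
        · exact h
    · left
      intro z hz
      rcases hsub (Or.inl hz) with h | h
      · exact h
      · exact absurd ⟨z, hz, h⟩ hMt'
  rcases hMtt with hMu | hMu
  · exact absurd (key t t' ht ht' hsub hempty hMu hne2) id
  · exact absurd (key t' t ht' ht (by rwa [union_comm t t'] at hsub)
      (by rwa [inter_comm t t'] at hempty) hMu hne1) id


/-- Complement of a proper closed connected set in an indecomposable connected space
is preconnected. -/
lemma compl_preconn [ConnectedSpace Z] (hindec : Indec Z) {M : Set Z} (hM : IsClosed M)
    (hMc : IsConnected M) (hMp : M ≠ univ) : IsPreconnected Mᶜ := by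
  by_contra hnc
  rw [IsPreconnected] at hnc
  push_neg at hnc
  obtain ⟨u, v, hu, hv, hcov, hne1, hne2, hemp⟩ := hnc
  set P := Mᶜ ∩ u with hPdef
  set Q := Mᶜ ∩ v with hQdef
  have hPopen : IsOpen P := hM.isOpen_compl.inter hu
  have hQopen : IsOpen Q := hM.isOpen_compl.inter hv
  have hdisj : P ∩ Q = ∅ := by
    rw [← hemp]
    ext z
    constructor
    · rintro ⟨⟨h1, h2⟩, ⟨h3, h4⟩⟩; exact ⟨h1, h2, h4⟩
    · rintro ⟨h1, h2, h3⟩; exact ⟨⟨h1, h2⟩, ⟨h1, h3⟩⟩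
  have hcov' : Mᶜ = P ∪ Q := by
    ext z
    constructor
    · intro hz
      rcases hcov hz with h | h
      · exact Or.inl ⟨hz, h⟩
      · exact Or.inr ⟨hz, h⟩
    · rintro (⟨h1, _⟩ | ⟨h1, _⟩) <;> exact h1
  have hA : IsPreconnected (M ∪ P) :=
    attach hMc.isPreconnected hMc.nonempty hPopen hQopen hdisj hcov'
  have hB : IsPreconnected (M ∪ Q) :=
    attach hMc.isPreconnected hMc.nonempty hQopen hPopen
      (by rw [inter_comm] at hdisj; exact hdisj) (by rw [union_comm] at hcov'; exact hcov')
  have hAclosed : IsClosed (M ∪ P) := by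
    have : M ∪ P = Qᶜ := by
      apply Subset.antisymm
      · rintro z (hz | hz) hzQ
        · exact hzQ.1 hz
        · have : z ∈ P ∩ Q := ⟨hz, hzQ⟩
          rw [hdisj] at this; exact this
      · intro z hz
        by_cases hzM : z ∈ M
        · exact Or.inl hzM
        · rcases (hcov' ▸ hzM : z ∈ P ∪ Q) with h | h
          · exact Or.inr h
          · exact absurd h hz
    rw [this]
    exact hQopen.isClosed_compl
  have hBclosed : IsClosed (M ∪ Q) := by
    have : M ∪ Q = Pᶜ := by
      apply Subset.antisymm
      · rintro z (hz | hz) hzP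
        · exact hzP.1 hz
        · have : z ∈ P ∩ Q := ⟨hzP, hz⟩
          rw [hdisj] at this; exact this
      · intro z hz
        by_cases hzM : z ∈ M
        · exact Or.inl hzM
        · rcases (hcov' ▸ hzM : z ∈ P ∪ Q) with h | h
          · exact absurd h hz
          · exact Or.inr h
    rw [this]
    exact hPopen.isClosed_compl
  apply hindec
  refine ⟨M ∪ P, M ∪ Q, hAclosed, ⟨hMc.nonempty.mono subset_union_left, hA⟩, ?_,
    hBclosed, ⟨hMc.nonempty.mono subset_union_left, hB⟩, ?_, ?_⟩
  · obtain ⟨z, hz⟩ := hne2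
    intro h
    have hzA : z ∈ M ∪ P := h ▸ mem_univ z
    rcases hzA with h1 | h1
    · exact hz.1 h1
    · have : z ∈ P ∩ Q := ⟨h1, hz⟩
      rw [hdisj] at this; exact this
  · obtain ⟨z, hz⟩ := hne1
    intro h
    have hzB : z ∈ M ∪ Q := h ▸ mem_univ z
    rcases hzB with h1 | h1
    · exact hz.1 h1
    · have : z ∈ P ∩ Q := ⟨hz, h1⟩
      rw [hdisj] at this; exact this
  · apply eq_univ_of_forall
    intro z
    by_cases hzM : z ∈ M
    · exact Or.inl (Or.inl hzM)
    · rcases (hcov' ▸ hzM : z ∈ P ∪ Q) with h | h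
      · exact Or.inl (Or.inr h)
      · exact Or.inr (Or.inr h)

/-- Proper closed connected subsets of an indecomposable connected space have
empty interior. -/
lemma interior_empty [ConnectedSpace Z] (hindec : Indec Z) {M : Set Z} (hM : IsClosed M)
    (hMc : IsConnected M) (hMp : M ≠ univ) : interior M = ∅ := by
  by_contra hne
  obtain ⟨x, hx⟩ := nonempty_iff_ne_empty.mpr hne
  have hMcne : Mᶜ.Nonempty := nonempty_compl.mpr hMp
  apply hindec
  refine ⟨M, closure Mᶜ, hM, hMc, hMp, isClosed_closure,
    ⟨hMcne.mono subset_closure, (compl_preconn hindec hM hMc hMp).closure⟩, ?_, ?_⟩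
  · intro h
    have hxcl : x ∈ closure Mᶜ := h ▸ mem_univ x
    obtain ⟨y, hy1, hy2⟩ := mem_closure_iff.mp hxcl (interior M) isOpen_interior hx
    exact hy2 (interior_subset hy1)
  · apply eq_univ_of_forall
    intro z
    by_cases hzM : z ∈ M
    · exact Or.inl hzM
    · exact Or.inr (subset_closure hzM)
/-- An indecomposable connected space is not the union of finitely many proper
closed connected subsets. -/
lemma no_finite_cover [ConnectedSpace Z] [Nonempty Z] (hindec : Indec Z) :
    ∀ (𝒜 : Finset (Set Z)), (∀ A ∈ 𝒜, IsClosed A ∧ IsConnected A ∧ A ≠ univ) →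
    ⋃₀ (↑𝒜 : Set (Set Z)) = univ → False := by
  classical
  suffices H : ∀ n (𝒜 : Finset (Set Z)), 𝒜.card = n →
      (∀ A ∈ 𝒜, IsClosed A ∧ IsConnected A ∧ A ≠ univ) →
      ⋃₀ (↑𝒜 : Set (Set Z)) = univ → False by
    intro 𝒜 h1 h2
    exact H 𝒜.card 𝒜 rfl h1 h2
  intro n
  induction n using Nat.strong_induction_on with
  | _ n ih =>
    intro 𝒜 hcard hprops hcov
    by_cases hex : ∃ A ∈ 𝒜, ∃ B ∈ 𝒜, A ≠ B ∧ (A ∩ B).Nonempty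
    · obtain ⟨A, hA, B, hB, hAB, hABne⟩ := hex
      obtain ⟨hAcl, hAco, hAp⟩ := hprops A hA
      obtain ⟨hBcl, hBco, hBp⟩ := hprops B hB
      have hABconn : IsPreconnected (A ∪ B) :=
        IsPreconnected.union' hABne hAco.isPreconnected hBco.isPreconnected
      by_cases huniv : A ∪ B = univ
      · exact hindec ⟨A, B, hAcl, hAco, hAp, hBcl, hBco, hBp, huniv⟩
      · set 𝒜' := insert (A ∪ B) ((𝒜.erase A).erase B) with h𝒜'
        have hcard2 : 1 < 𝒜.card := Finset.one_lt_card.mpr ⟨A, hA, B, hB, hAB⟩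
        have hBe : B ∈ 𝒜.erase A := Finset.mem_erase.mpr ⟨Ne.symm hAB, hB⟩
        have hcard' : 𝒜'.card < n := by
          have h1 : ((𝒜.erase A).erase B).card = 𝒜.card - 2 := by
            rw [Finset.card_erase_of_mem hBe, Finset.card_erase_of_mem hA]
            omega
          have h2 : 𝒜'.card ≤ 𝒜.card - 2 + 1 := by
            rw [h𝒜']
            exact (Finset.card_insert_le _ _).trans (by rw [h1])
          omega
        apply ih 𝒜'.card hcard' 𝒜' rfl
        · intro C hC
          rcases Finset.mem_insert.mp hC with h | h
          · subst h
            exact ⟨hAcl.union hBcl, ⟨hAco.nonempty.mono subset_union_left, hABconn⟩, huniv⟩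
          · exact hprops C (Finset.mem_of_mem_erase (Finset.mem_of_mem_erase h))
        · apply eq_univ_of_forall
          intro z
          have hz : z ∈ ⋃₀ (↑𝒜 : Set (Set Z)) := hcov ▸ mem_univ z
          obtain ⟨C, hC, hzC⟩ := hz
          by_cases hCA : C = A
          · exact ⟨A ∪ B, Finset.mem_coe.mpr (Finset.mem_insert_self _ _), Or.inl (hCA ▸ hzC)⟩
          by_cases hCB : C = B
          · exact ⟨A ∪ B, Finset.mem_coe.mpr (Finset.mem_insert_self _ _), Or.inr (hCB ▸ hzC)⟩
          · refine ⟨C, ?_, hzC⟩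
            apply Finset.mem_coe.mpr
            apply Finset.mem_insert_of_mem
            exact Finset.mem_erase.mpr ⟨hCB, Finset.mem_erase.mpr ⟨hCA, hC⟩⟩
    · push_neg at hex
      by_cases h0 : 𝒜 = ∅
      · rw [h0] at hcov
        simp only [Finset.coe_empty, sUnion_empty] at hcov
        obtain ⟨z⟩ := ‹Nonempty Z›
        exact absurd (hcov ▸ mem_univ z) (notMem_empty z)
      · obtain ⟨A, hA⟩ := Finset.nonempty_iff_ne_empty.mpr h0
        obtain ⟨hAcl, hAco, hAp⟩ := hprops A hA
        set B' := ⋃₀ (↑(𝒜.erase A) : Set (Set Z)) with hB'def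
        have hB'closed : IsClosed B' := by
          rw [hB'def, sUnion_eq_biUnion]
          exact Set.Finite.isClosed_biUnion (Finset.finite_toSet _)
            (fun C hC => (hprops C (Finset.mem_of_mem_erase hC)).1)
        have hdisjAB : A ∩ B' = ∅ := by
          rw [eq_empty_iff_forall_notMem]
          rintro z ⟨hzA, C, hC, hzC⟩
          have hC𝒜 := Finset.mem_of_mem_erase (Finset.mem_coe.mp hC)
          have hCA : A ≠ C := fun h => (Finset.mem_erase.mp (Finset.mem_coe.mp hC)).1 h.symm
          exact (eq_empty_iff_forall_notMem.mp (hex A hA C hC𝒜 hCA) z) ⟨hzA, hzC⟩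
        have hcovAB : A ∪ B' = univ := by
          apply eq_univ_of_forall
          intro z
          have hz : z ∈ ⋃₀ (↑𝒜 : Set (Set Z)) := hcov ▸ mem_univ z
          obtain ⟨C, hC, hzC⟩ := hz
          by_cases hCA : C = A
          · exact Or.inl (hCA ▸ hzC)
          · exact Or.inr ⟨C, Finset.mem_coe.mpr (Finset.mem_erase.mpr ⟨hCA, hC⟩), hzC⟩
        have hAopen : IsOpen A := by
          have : A = B'ᶜ := by
            apply Subset.antisymm
            · intro z hz hzB'
              exact (eq_empty_iff_forall_notMem.mp hdisjAB z) ⟨hz, hzB'⟩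
            · intro z hz
              rcases (hcovAB ▸ mem_univ z : z ∈ A ∪ B') with h | h
              · exact h
              · exact absurd h hz
          rw [this]
          exact hB'closed.isOpen_compl
        rcases isClopen_iff.mp ⟨hAcl, hAopen⟩ with h | h
        · exact hAco.nonempty.ne_empty h
        · exact hAp h

/-- Boundary bumping, abstract version: in a compact T2 preconnected space, the connected
component of a point in a closed set `F` with nonempty complement reaches `closure Fᶜ`. -/
lemma bump_abstract {α : Type*} [TopologicalSpace α] [T2Space α] [CompactSpace α]
    [PreconnectedSpace α] {F : Set α} (hF : IsClosed F) {q : α} (hq : q ∈ F)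
    (hFc : Fᶜ.Nonempty) : ∃ Q : Set α, Q ⊆ F ∧ q ∈ Q ∧ IsCompact Q ∧ IsPreconnected Q ∧
      (Q ∩ closure Fᶜ).Nonempty := by
  classical
  haveI : CompactSpace F := isCompact_iff_compactSpace.mp hF.isCompact
  set q' : F := ⟨q, hq⟩ with hq'def
  refine ⟨Subtype.val '' connectedComponent q', ?_, ⟨q', mem_connectedComponent, rfl⟩,
    isClosed_connectedComponent.isCompact.image continuous_subtype_val,
    isPreconnected_connectedComponent.image _ continuous_subtype_val.continuousOn, ?_⟩
  · rintro z ⟨w, _, rfl⟩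
    exact w.2
  by_contra hcon
  rw [not_nonempty_iff_eq_empty] at hcon
  set B : Set F := Subtype.val ⁻¹' closure Fᶜ with hBdef
  have hBclosed : IsClosed B := isClosed_closure.preimage continuous_subtype_val
  have hBcompact : IsCompact B := hBclosed.isCompact
  have hdisjB : connectedComponent q' ∩ B = ∅ := by
    rw [eq_empty_iff_forall_notMem]
    rintro w ⟨hw1, hw2⟩
    exact (eq_empty_iff_forall_notMem.mp hcon ↑w) ⟨⟨w, hw1, rfl⟩, hw2⟩
  have hcover : B ⊆ ⋃ (s : {s : Set F // IsClopen s ∧ q' ∈ s}), (↑s : Set F)ᶜ := by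
    intro w hw
    by_contra hnot
    simp only [mem_iUnion, not_exists, mem_compl_iff, not_not] at hnot
    have hwin : w ∈ ⋂ (s : {s : Set F // IsClopen s ∧ q' ∈ s}), (s : Set F) :=
      mem_iInter.mpr fun s => hnot s
    rw [← connectedComponent_eq_iInter_isClopen] at hwin
    exact (eq_empty_iff_forall_notMem.mp hdisjB w) ⟨hwin, hw⟩
  obtain ⟨t, ht⟩ := hBcompact.elim_finite_subcover
    (fun s : {s : Set F // IsClopen s ∧ q' ∈ s} => (↑s : Set F)ᶜ)
    (fun s => s.2.1.compl.isOpen) hcover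
  set Z₀ : Set F := ⋂ s ∈ t, (↑s : Set F) with hZ₀def
  have hZ₀clopen : IsClopen Z₀ := isClopen_biInter_finset fun s _ => s.2.1
  have hqZ₀ : q' ∈ Z₀ := mem_iInter₂.mpr fun s _ => s.2.2
  have hZ₀B : Z₀ ∩ B = ∅ := by
    rw [eq_empty_iff_forall_notMem]
    rintro w ⟨hw1, hw2⟩
    obtain ⟨s, hs, hws⟩ := mem_iUnion₂.mp (ht hw2)
    exact hws (mem_iInter₂.mp hw1 s hs)
  set V : Set α := Subtype.val '' Z₀ with hVdef
  have hVF : V ⊆ F := by rintro z ⟨w, _, rfl⟩; exact w.2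
  have hVcompact : IsCompact V := hZ₀clopen.isClosed.isCompact.image continuous_subtype_val
  have hVclosed : IsClosed V := hVcompact.isClosed
  have hVopen : IsOpen V := by
    obtain ⟨U, hU, hUeq⟩ := isOpen_induced_iff.mp hZ₀clopen.isOpen
    have : V = U ∩ (closure Fᶜ)ᶜ := by
      apply Subset.antisymm
      · rintro z ⟨w, hwZ₀, rfl⟩
        refine ⟨?_, fun hzc => ?_⟩
        · have : w ∈ Subtype.val ⁻¹' U := hUeq ▸ hwZ₀
          exact this
        · exact (eq_empty_iff_forall_notMem.mp hZ₀B w) ⟨hwZ₀, hzc⟩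
      · rintro z ⟨hzU, hzc⟩
        have hzF : z ∈ F := by
          by_contra hzF
          exact hzc (subset_closure hzF)
        refine ⟨⟨z, hzF⟩, ?_, rfl⟩
        rw [← hUeq]
        exact hzU
    rw [this]
    exact hU.inter isClosed_closure.isOpen_compl
  rcases isClopen_iff.mp ⟨hVclosed, hVopen⟩ with h | h
  · exact (eq_empty_iff_forall_notMem.mp h q) ⟨q', hqZ₀, rfl⟩
  · obtain ⟨w, hw⟩ := hFc
    exact hw (hVF (h ▸ mem_univ w))

/-- Boundary bumping, ambient version: inside a compact preconnected set `C`, the part of `C`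
avoiding an open set `N` that is connected to `q` reaches `closure N`, provided `C` meets `N`. -/
lemma bump {C N : Set Z} (hC : IsCompact C) (hCc : IsPreconnected C) (hN : IsOpen N)
    (hCN : (C ∩ N).Nonempty) {q : Z} (hqC : q ∈ C) (hqN : q ∉ N) :
    ∃ Q : Set Z, Q ⊆ C ∧ Q ∩ N = ∅ ∧ q ∈ Q ∧ IsCompact Q ∧ IsPreconnected Q ∧
      (Q ∩ closure N).Nonempty := by
  haveI : CompactSpace C := isCompact_iff_compactSpace.mp hC
  haveI : PreconnectedSpace C := Subtype.preconnectedSpace hCc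
  set F : Set C := Subtype.val ⁻¹' Nᶜ with hFdef
  have hFclosed : IsClosed F := hN.isClosed_compl.preimage continuous_subtype_val
  have hq' : (⟨q, hqC⟩ : C) ∈ F := hqN
  have hFc : Fᶜ.Nonempty := by
    obtain ⟨w, hwC, hwN⟩ := hCN
    refine ⟨⟨w, hwC⟩, ?_⟩
    simp only [hFdef, mem_compl_iff, mem_preimage, not_not]
    exact hwN
  obtain ⟨Q', hQ'F, hqQ', hQ'comp, hQ'conn, hQ'touch⟩ := bump_abstract hFclosed hq' hFc
  refine ⟨Subtype.val '' Q', ?_, ?_, ⟨⟨q, hqC⟩, hqQ', rfl⟩,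
    hQ'comp.image continuous_subtype_val,
    hQ'conn.image _ continuous_subtype_val.continuousOn, ?_⟩
  · rintro z ⟨w, _, rfl⟩; exact w.2
  · rw [eq_empty_iff_forall_notMem]
    rintro z ⟨⟨w, hwQ', rfl⟩, hzN⟩
    exact (hQ'F hwQ') hzN
  · obtain ⟨w, hwQ', hwcl⟩ := hQ'touch
    refine ⟨↑w, ⟨w, hwQ', rfl⟩, ?_⟩
    have h1 : Fᶜ = Subtype.val ⁻¹' N := by
      rw [hFdef, ← preimage_compl, compl_compl]
    rw [h1] at hwcl
    have := continuous_subtype_val.closure_preimage_subset N hwcl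
    exact this

/-- The continuumwise component of `q` in the complement of `M`. -/
def scls (M : Set Z) (q : Z) : Set Z :=
  {z | ∃ C : Set Z, IsCompact C ∧ IsPreconnected C ∧ C ∩ M = ∅ ∧ q ∈ C ∧ z ∈ C}

lemma self_mem_scls {M : Set Z} {q : Z} (hq : q ∉ M) : q ∈ scls M q :=
  ⟨{q}, isCompact_singleton, isPreconnected_singleton, by
    rw [eq_empty_iff_forall_notMem]; rintro z ⟨hz1, hz2⟩
    rw [mem_singleton_iff] at hz1; exact hq (hz1 ▸ hz2), rfl, rfl⟩

lemma scls_subset_compl {M : Set Z} {q : Z} : scls M q ⊆ Mᶜ := by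
  rintro z ⟨C, _, _, hCM, _, hzC⟩ hzM
  exact (eq_empty_iff_forall_notMem.mp hCM z) ⟨hzC, hzM⟩

lemma scls_preconn {M : Set Z} {q : Z} : IsPreconnected (scls M q) := by
  have : scls M q = ⋃₀ {C | IsCompact C ∧ IsPreconnected C ∧ C ∩ M = ∅ ∧ q ∈ C} := by
    apply Subset.antisymm
    · rintro z ⟨C, h1, h2, h3, h4, h5⟩
      exact ⟨C, ⟨h1, h2, h3, h4⟩, h5⟩
    · rintro z ⟨C, ⟨h1, h2, h3, h4⟩, h5⟩
      exact ⟨C, h1, h2, h3, h4, h5⟩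
  rw [this]
  exact isPreconnected_sUnion q _ (fun s hs => hs.2.2.2) (fun s hs => hs.2.1)

/-- Any `C` witnessing membership in a class is inside the class. -/
lemma subset_scls {M : Set Z} {q : Z} {C : Set Z} (h1 : IsCompact C) (h2 : IsPreconnected C)
    (h3 : C ∩ M = ∅) (h4 : q ∈ C) : C ⊆ scls M q :=
  fun _ hz => ⟨C, h1, h2, h3, h4, hz⟩

/-- The closure of each continuumwise component of `Mᶜ` touches the closed set `M`. -/
lemma scls_touch (hsemi : Semic Z) {M : Set Z} (hM : IsClosed M) (hMne : M.Nonempty)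
    {q : Z} (hq : q ∉ M) : (closure (scls M q) ∩ M).Nonempty := by
  obtain ⟨m₀, hm₀⟩ := hMne
  obtain ⟨C₀, hC₀comp, hC₀conn, _, hqC₀, hmC₀⟩ := hsemi q m₀
  have hd₀ : 0 < infDist q M := (hM.notMem_iff_infDist_pos ⟨m₀, hm₀⟩).mp hq
  -- for every k, find a point of the class within 1/(k+1) of M, inside C₀
  have key : ∀ k : ℕ, ∃ z : Z, z ∈ C₀ ∧ z ∈ scls M q ∧ infDist z M ≤ 1 / (k + 1) := by
    intro k
    set η : ℝ := min (infDist q M) (1 / (k + 1)) with hηdef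
    have hηpos : 0 < η := lt_min hd₀ (by positivity)
    set N : Set Z := {z | infDist z M < η} with hNdef
    have hNopen : IsOpen N := by
      have : N = (fun z => infDist z M) ⁻¹' (Iio η) := rfl
      rw [this]
      exact (continuous_infDist_pt M).isOpen_preimage _ isOpen_Iio
    have hMN : M ⊆ N := by
      intro z hz
      have : infDist z M = 0 := infDist_zero_of_mem hz
      simp only [hNdef, mem_setOf_eq, this]
      exact hηpos
    have hqN : q ∉ N := by
      simp only [hNdef, mem_setOf_eq, not_lt]
      exact min_le_left _ _
    have hCN : (C₀ ∩ N).Nonempty := ⟨m₀, hmC₀, hMN hm₀⟩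
    obtain ⟨Q, hQC, hQN, hqQ, hQcomp, hQconn, hQtouch⟩ :=
      bump hC₀comp hC₀conn.isPreconnected hNopen hCN hqC₀ hqN
    obtain ⟨z, hzQ, hzcl⟩ := hQtouch
    have hQM : Q ∩ M = ∅ := by
      rw [eq_empty_iff_forall_notMem]
      rintro w ⟨hw1, hw2⟩
      exact (eq_empty_iff_forall_notMem.mp hQN w) ⟨hw1, hMN hw2⟩
    refine ⟨z, hQC hzQ, subset_scls hQcomp hQconn hQM hqQ hzQ, ?_⟩
    have hcl : closure N ⊆ {z | infDist z M ≤ η} := by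
      apply closure_minimal
      · intro w hw
        exact le_of_lt (show infDist w M < η from hw)
      · have : {z | infDist z M ≤ η} = (fun z => infDist z M) ⁻¹' (Iic η) := rfl
        rw [this]
        exact IsClosed.preimage (continuous_infDist_pt M) isClosed_Iic
    exact le_trans (hcl hzcl) (min_le_right _ _)
  choose z hzC₀ hzscls hzdist using key
  obtain ⟨z', hz'C₀, φ, hφmono, hφtend⟩ := hC₀comp.tendsto_subseq hzC₀
  have hz'M : z' ∈ M := by
    rw [hM.mem_iff_infDist_zero ⟨m₀, hm₀⟩]
    have htend : Tendsto (fun k => infDist (z (φ k)) M) atTop (𝓝 (infDist z' M)) :=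
      ((continuous_infDist_pt M).tendsto z').comp hφtend
    have hle : infDist z' M ≤ 0 := by
      apply le_of_tendsto_of_tendsto' htend tendsto_one_div_add_atTop_nhds_zero_nat
      intro k
      calc infDist (z (φ k)) M ≤ 1 / (φ k + 1) := hzdist (φ k)
        _ ≤ 1 / (k + 1) := by
            apply one_div_le_one_div_of_le (by positivity)
            have h : (k : ℝ) ≤ (φ k : ℝ) := Nat.cast_le.mpr hφmono.le_apply
            linarith
    exact le_antisymm hle infDist_nonneg
  refine ⟨z', ?_, hz'M⟩
  exact mem_closure_of_tendsto hφtend (Eventually.of_forall fun k => hzscls (φ k))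

/-- Central lemma: if `M` is a finite union of proper subcontinua of an indecomposable
semicontinuum, then for every `ε` some continuumwise component of `Mᶜ` meets every `ε`-ball. -/
lemma dense_class [ConnectedSpace Z] [Nontrivial Z] (hindec : Indec Z) (hsemi : Semic Z)
    (net : ∀ ε : ℝ, 0 < ε → ∃ s : Finset Z, ∀ z : Z, ∃ y ∈ s, dist z y < ε)
    {comps : Finset (Set Z)}
    (hcomps : ∀ A ∈ comps, IsCompact A ∧ IsConnected A ∧ A ≠ univ)
    (hMne : (⋃₀ (↑comps : Set (Set Z))).Nonempty) {ε : ℝ} (hε : 0 < ε) :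
    ∃ q, q ∉ ⋃₀ (↑comps : Set (Set Z)) ∧
      ∀ x : Z, (scls (⋃₀ (↑comps : Set (Set Z))) q ∩ ball x ε).Nonempty := by
  classical
  set M := ⋃₀ (↑comps : Set (Set Z)) with hMdef
  have hMclosed : IsClosed M := by
    rw [hMdef, sUnion_eq_biUnion]
    exact Set.Finite.isClosed_biUnion (Finset.finite_toSet _)
      (fun A hA => (hcomps A hA).1.isClosed)
  by_contra hcon
  push_neg at hcon
  obtain ⟨s, hs⟩ := net (ε / 2) (by positivity)
  set T : Z → Set Z → Set Z := fun y A =>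
    {z | ∃ q, q ∉ M ∧ z ∈ scls M q ∧ scls M q ∩ ball y (ε / 2) = ∅ ∧
      (closure (scls M q) ∩ A).Nonempty} with hTdef
  set 𝒜 : Finset (Set Z) :=
    (s ×ˢ comps).image (fun p => closure (T p.1 p.2) ∪ p.2) ∪ comps with h𝒜
  refine no_finite_cover hindec 𝒜 ?_ ?_
  · intro P hP
    rcases Finset.mem_union.mp hP with hP | hP
    · obtain ⟨p, hp, rfl⟩ := Finset.mem_image.mp hP
      obtain ⟨hy, hA⟩ := Finset.mem_product.mp hp
      obtain ⟨hAcomp, hAconn, hAprop⟩ := hcomps p.2 hA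
      set y := p.1
      set A := p.2
      have hTball : T y A ∩ ball y (ε / 2) = ∅ := by
        rw [eq_empty_iff_forall_notMem]
        rintro z ⟨⟨q, _, hzq, hqmiss, _⟩, hzball⟩
        exact (eq_empty_iff_forall_notMem.mp hqmiss z) ⟨hzq, hzball⟩
      have hclball : closure (T y A) ∩ ball y (ε / 2) = ∅ := by
        rw [eq_empty_iff_forall_notMem]
        rintro z ⟨hzcl, hzball⟩
        have : closure (T y A) ⊆ (ball y (ε / 2))ᶜ := by
          apply closure_minimal
          · intro w hw hwball
            exact (eq_empty_iff_forall_notMem.mp hTball w) ⟨hw, hwball⟩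
          · exact isOpen_ball.isClosed_compl
        exact this hzcl hzball
      refine ⟨isClosed_closure.union hAcomp.isClosed, ⟨hAconn.nonempty.mono subset_union_right, ?_⟩, ?_⟩
      · -- preconnectedness via sandwich
        set 𝒲 : Set (Set Z) := insert A
          {D | ∃ q, q ∉ M ∧ scls M q ∩ ball y (ε / 2) = ∅ ∧
            (closure (scls M q) ∩ A).Nonempty ∧ D = closure (scls M q) ∪ A} with h𝒲
        obtain ⟨a₀, ha₀⟩ := hAconn.nonempty
        have hWpre : IsPreconnected (⋃₀ 𝒲) := by
          apply isPreconnected_sUnion a₀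
          · rintro D (rfl | ⟨q, _, _, _, rfl⟩)
            · exact ha₀
            · exact Or.inr ha₀
          · rintro D (rfl | ⟨q, _, _, htouch, rfl⟩)
            · exact hAconn.isPreconnected
            · exact IsPreconnected.union' htouch scls_preconn.closure hAconn.isPreconnected
        have hsub1 : ⋃₀ 𝒲 ⊆ closure (T y A) ∪ A := by
          rintro z ⟨D, hD, hzD⟩
          rcases hD with rfl | ⟨q, hq, hmiss, htouch, rfl⟩
          · exact Or.inr hzD
          · rcases hzD with hz | hz
            · left
              apply closure_mono (show scls M q ⊆ T y A from ?_) hz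
              intro w hw
              exact ⟨q, hq, hw, hmiss, htouch⟩
            · exact Or.inr hz
        have hsub2 : closure (T y A) ∪ A ⊆ closure (⋃₀ 𝒲) := by
          rintro z (hz | hz)
          · apply closure_mono (show T y A ⊆ ⋃₀ 𝒲 from ?_) hz
            rintro w ⟨q, hq, hwq, hmiss, htouch⟩
            exact ⟨closure (scls M q) ∪ A, Or.inr ⟨q, hq, hmiss, htouch, rfl⟩,
              Or.inl (subset_closure hwq)⟩
          · exact subset_closure ⟨A, Or.inl rfl, hz⟩
        exact hWpre.subset_closure hsub1 hsub2
      · -- properness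
        have hint : interior A = ∅ := interior_empty hindec hAcomp.isClosed hAconn hAprop
        have hnsub : ¬ ball y (ε / 2) ⊆ A := by
          intro hsub
          have h2 : ball y (ε / 2) ⊆ interior A := interior_maximal hsub isOpen_ball
          rw [hint] at h2
          exact (nonempty_ball.mpr (by positivity)).ne_empty (subset_empty_iff.mp h2)
        obtain ⟨w, hw1, hw2⟩ := not_subset.mp hnsub
        intro huniv
        have hwP : w ∈ closure (T y A) ∪ A := huniv ▸ mem_univ w
        rcases hwP with h | h
        · exact (eq_empty_iff_forall_notMem.mp hclball w) ⟨h, hw1⟩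
        · exact hw2 h
    · obtain ⟨h1, h2, h3⟩ := hcomps P hP
      exact ⟨h1.isClosed, h2, h3⟩
  · apply eq_univ_of_forall
    intro z
    by_cases hzM : z ∈ M
    · obtain ⟨A, hA, hzA⟩ := hzM
      exact ⟨A, Finset.mem_coe.mpr (Finset.mem_union_right _ (Finset.mem_coe.mp hA)), hzA⟩
    · obtain ⟨x, hx⟩ := hcon z hzM
      obtain ⟨y, hy, hyx⟩ := hs x
      have hmiss : scls M z ∩ ball y (ε / 2) = ∅ := by
        rw [eq_empty_iff_forall_notMem]
        rintro w ⟨hw1, hw2⟩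
        have hwx : w ∈ ball x ε := by
          rw [mem_ball] at hw2 ⊢
          calc dist w x ≤ dist w y + dist y x := dist_triangle w y x
            _ < ε / 2 + ε / 2 := by
                rw [dist_comm y x]
                exact add_lt_add hw2 hyx
            _ = ε := by ring
        exact (eq_empty_iff_forall_notMem.mp hx w) ⟨hw1, hwx⟩
      obtain ⟨m, hmcl, hmM⟩ := scls_touch hsemi hMclosed hMne hzM
      obtain ⟨A, hA, hmA⟩ := hmM
      refine ⟨closure (T y A) ∪ A, ?_, ?_⟩
      · apply Finset.mem_coe.mpr
        apply Finset.mem_union_left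
        exact Finset.mem_image.mpr ⟨(y, A), Finset.mem_product.mpr ⟨hy, Finset.mem_coe.mp hA⟩, rfl⟩
      · exact Or.inl (subset_closure ⟨z, hzM, self_mem_scls hzM, hmiss, ⟨m, hmcl, hmA⟩⟩)

/-- Step lemma: given finitely many proper subcontinua, there is a subcontinuum avoiding
all of them which is `ε`-dense. -/
lemma step [ConnectedSpace Z] [Nontrivial Z] (hindec : Indec Z) (hsemi : Semic Z)
    (net : ∀ ε : ℝ, 0 < ε → ∃ s : Finset Z, ∀ z : Z, ∃ y ∈ s, dist z y < ε)
    {comps : Finset (Set Z)}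
    (hcomps : ∀ A ∈ comps, IsCompact A ∧ IsConnected A ∧ A ≠ univ)
    (hMne : (⋃₀ (↑comps : Set (Set Z))).Nonempty) {ε : ℝ} (hε : 0 < ε) :
    ∃ K : Set Z, IsCompact K ∧ IsConnected K ∧ K.Nontrivial ∧
      K ∩ ⋃₀ (↑comps : Set (Set Z)) = ∅ ∧ ∀ x : Z, infDist x K ≤ ε := by
  classical
  set M := ⋃₀ (↑comps : Set (Set Z)) with hMdef
  obtain ⟨a, b, hab⟩ := exists_pair_ne Z
  have hΔ : 0 < dist a b := dist_pos.mpr hab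
  set δ : ℝ := min (ε / 2) (dist a b / 8) with hδdef
  have hδpos : 0 < δ := lt_min (by positivity) (by positivity)
  obtain ⟨q, hqM, hqdense⟩ := dense_class hindec hsemi net hcomps hMne hδpos
  obtain ⟨s, hs⟩ := net δ hδpos
  have key : ∀ y : Z, ∃ z : Z, ∃ C : Set Z, z ∈ ball y δ ∧ IsCompact C ∧
      IsPreconnected C ∧ C ∩ M = ∅ ∧ q ∈ C ∧ z ∈ C := by
    intro y
    obtain ⟨z, hz1, hz2⟩ := hqdense y
    obtain ⟨C, h1, h2, h3, h4, h5⟩ := hz1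
    exact ⟨z, C, hz2, h1, h2, h3, h4, h5⟩
  choose z C hzball hCcomp hCconn hCM hqC hzC using key
  have hsne : ∃ y₀, y₀ ∈ s := by
    obtain ⟨y₀, hy₀, _⟩ := hs a
    exact ⟨y₀, hy₀⟩
  obtain ⟨y₀, hy₀⟩ := hsne
  set K : Set Z := ⋃ y ∈ s, C y with hKdef
  have hKcomp : IsCompact K := s.isCompact_biUnion fun y _ => hCcomp y
  have hqK : q ∈ K := mem_biUnion hy₀ (hqC y₀)
  have hKconn : IsPreconnected K := by
    have : K = ⋃₀ ((fun y => C y) '' ↑s) := by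
      rw [sUnion_image, Finset.set_biUnion_coe]
    rw [this]
    apply isPreconnected_sUnion q
    · rintro D ⟨y, _, rfl⟩
      exact hqC y
    · rintro D ⟨y, _, rfl⟩
      exact hCconn y
  have hKM : K ∩ M = ∅ := by
    rw [eq_empty_iff_forall_notMem]
    rintro w ⟨hwK, hwM⟩
    obtain ⟨y, _, hwy⟩ := mem_iUnion₂.mp hwK
    exact (eq_empty_iff_forall_notMem.mp (hCM y) w) ⟨hwy, hwM⟩
  have hKdense : ∀ x : Z, infDist x K ≤ ε := by
    intro x
    obtain ⟨y, hy, hxy⟩ := hs x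
    have hzK : z y ∈ K := mem_biUnion hy (hzC y)
    have : dist x (z y) ≤ 2 * δ := by
      have h1 : dist (z y) y < δ := mem_ball.mp (hzball y)
      calc dist x (z y) ≤ dist x y + dist y (z y) := dist_triangle x y (z y)
        _ ≤ δ + δ := by
            rw [dist_comm y (z y)]
            exact add_le_add (le_of_lt hxy) (le_of_lt h1)
        _ = 2 * δ := by ring
    calc infDist x K ≤ dist x (z y) := infDist_le_dist_of_mem hzK
      _ ≤ 2 * δ := this
      _ ≤ ε := by
          have := min_le_left (ε / 2) (dist a b / 8)
          rw [hδdef]; linarith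
  have hKnontriv : K.Nontrivial := by
    obtain ⟨ya, hya, hxa⟩ := hs a
    obtain ⟨yb, hyb, hxb⟩ := hs b
    have hzaK : z ya ∈ K := mem_biUnion hya (hzC ya)
    have hzbK : z yb ∈ K := mem_biUnion hyb (hzC yb)
    have hda : dist a (z ya) ≤ 2 * δ := by
      have h1 : dist (z ya) ya < δ := mem_ball.mp (hzball ya)
      calc dist a (z ya) ≤ dist a ya + dist ya (z ya) := dist_triangle _ _ _
        _ ≤ δ + δ := by
            rw [dist_comm ya (z ya)]
            exact add_le_add (le_of_lt hxa) (le_of_lt h1)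
        _ = 2 * δ := by ring
    have hdb : dist b (z yb) ≤ 2 * δ := by
      have h1 : dist (z yb) yb < δ := mem_ball.mp (hzball yb)
      calc dist b (z yb) ≤ dist b yb + dist yb (z yb) := dist_triangle _ _ _
        _ ≤ δ + δ := by
            rw [dist_comm yb (z yb)]
            exact add_le_add (le_of_lt hxb) (le_of_lt h1)
        _ = 2 * δ := by ring
    refine ⟨z ya, hzaK, z yb, hzbK, fun h => ?_⟩
    have h8 : δ ≤ dist a b / 8 := min_le_right _ _
    have htri : dist a b ≤ dist a (z ya) + dist (z ya) b := dist_triangle _ _ _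
    rw [h] at hda
    rw [h] at htri
    have hzb : dist (z yb) b = dist b (z yb) := dist_comm _ _
    linarith
  exact ⟨K, hKcomp, ⟨⟨q, hqK⟩, hKconn⟩, hKnontriv, hKM, hKdense⟩

/-- The sequence of pairwise disjoint, increasingly dense subcontinua. -/
lemma seq [ConnectedSpace Z] [Nontrivial Z] (hindec : Indec Z) (hsemi : Semic Z)
    (net : ∀ ε : ℝ, 0 < ε → ∃ s : Finset Z, ∀ z : Z, ∃ y ∈ s, dist z y < ε) :
    ∃ f : ℕ → Set Z, (∀ n, IsCompact (f n) ∧ IsConnected (f n) ∧ (f n).Nontrivial ∧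
      ∀ x : Z, infDist x (f n) ≤ 1 / (n + 1)) ∧
      ∀ m n, m < n → f m ∩ f n = ∅ := by
  classical
  obtain ⟨z₀⟩ := (inferInstance : Nonempty Z)
  set P : ℕ × Set Z → Prop := fun p => IsCompact p.2 ∧ IsConnected p.2 ∧ p.2.Nontrivial ∧
    p.2 ≠ univ ∧ ∀ x : Z, infDist x p.2 ≤ 1 / (p.1 + 1) with hPdef
  set r : ℕ × Set Z → ℕ × Set Z → Prop := fun p p' => p.1 < p'.1 ∧ p.2 ∩ p'.2 = ∅ with hrdef
  have hmain : ∀ t : Finset (ℕ × Set Z), (∀ p ∈ t, P p) → ∃ p', P p' ∧ ∀ p ∈ t, r p p' := by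
    intro t hPt
    set comps : Finset (Set Z) := insert {z₀} (t.image Prod.snd) with hcompsdef
    have hcomps : ∀ A ∈ comps, IsCompact A ∧ IsConnected A ∧ A ≠ univ := by
      intro A hA
      rcases Finset.mem_insert.mp hA with rfl | hA
      · refine ⟨isCompact_singleton, isConnected_singleton, ?_⟩
        intro h
        obtain ⟨w, w', hww⟩ := exists_pair_ne Z
        have h1 : w ∈ ({z₀} : Set Z) := h ▸ mem_univ w
        have h2 : w' ∈ ({z₀} : Set Z) := h ▸ mem_univ w'
        rw [mem_singleton_iff] at h1 h2
        exact hww (h1.trans h2.symm)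
      · obtain ⟨p, hp, rfl⟩ := Finset.mem_image.mp hA
        obtain ⟨h1, h2, _, h4, _⟩ := hPt p hp
        exact ⟨h1, h2, h4⟩
    have hMne : (⋃₀ (↑comps : Set (Set Z))).Nonempty :=
      ⟨z₀, {z₀}, Finset.mem_coe.mpr (Finset.mem_insert_self _ _), rfl⟩
    set k : ℕ := (t.sup Prod.fst) + 1 with hkdef
    have hεpos : (0 : ℝ) < 1 / (k + 1) := by positivity
    obtain ⟨K, hK1, hK2, hK3, hK4, hK5⟩ := step hindec hsemi net hcomps hMne hεpos
    refine ⟨(k, K), ⟨hK1, hK2, hK3, ?_, hK5⟩, ?_⟩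
    · intro h
      obtain ⟨w, hw⟩ := hMne
      have hwK : w ∈ K := by
        have : ((k, K).2 : Set Z) = univ := h
        rw [show ((k, K).2 : Set Z) = K from rfl] at this
        rw [this]; exact mem_univ w
      exact (eq_empty_iff_forall_notMem.mp hK4 w) ⟨hwK, hw⟩
    · intro p hp
      constructor
      · have : p.1 ≤ t.sup Prod.fst := Finset.le_sup hp
        omega
      · rw [eq_empty_iff_forall_notMem]
        rintro w ⟨hw1, hw2⟩
        have hwM : w ∈ ⋃₀ (↑comps : Set (Set Z)) :=
          ⟨p.2, Finset.mem_coe.mpr (Finset.mem_insert_of_mem (Finset.mem_image_of_mem _ hp)), hw1⟩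
        exact (eq_empty_iff_forall_notMem.mp hK4 w) ⟨hw2, hwM⟩
  obtain ⟨g, hgP, hgr⟩ := exists_seq_of_forall_finset_exists P r hmain
  refine ⟨fun n => (g n).2, fun n => ?_, fun m n hmn => (hgr m n hmn).2⟩
  obtain ⟨h1, h2, h3, _, h5⟩ := hgP n
  refine ⟨h1, h2, h3, fun x => le_trans (h5 x) ?_⟩
  apply one_div_le_one_div_of_le (by positivity)
  have hg1 : StrictMono (fun n => (g n).1) := fun m n hmn => (hgr m n hmn).1
  have := hg1.le_apply (x := n)
  have hc : (n : ℝ) ≤ ((g n).1 : ℝ) := Nat.cast_le.mpr this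
  linarith

end Stmt4Aux

open Stmt4Aux Set Metric Topology Filter in
/-- Let `(Y, d)` be a continuum and `X ⊆ Y` a dense subset which, with the
subspace topology, is an indecomposable semicontinuum. Then there is a sequence of pairwise
disjoint subcontinua `Xₙ` of `Y` with `Xₙ ⊆ X` and `d_H(Xₙ, Y) = sup_{y ∈ Y} d(y, Xₙ) → 0`. -/
theorem stmt_4 {Y : Type*} [MetricSpace Y] [CompactSpace Y] [ConnectedSpace Y] [Nontrivial Y]
    (X : Set Y) (hdense : Dense X)
    (hXconn : ConnectedSpace X)
    (hsemi : ∀ x y : X, ∃ K : Set X,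
      IsCompact K ∧ IsConnected K ∧ K.Nontrivial ∧ x ∈ K ∧ y ∈ K)
    (hindec : ¬ ∃ A B : Set X,
      IsClosed A ∧ IsConnected A ∧ A ≠ Set.univ ∧
      IsClosed B ∧ IsConnected B ∧ B ≠ Set.univ ∧ A ∪ B = Set.univ) :
    ∃ Xn : ℕ → Set Y,
      (∀ n, Xn n ⊆ X) ∧
      (∀ n, IsCompact (Xn n) ∧ IsConnected (Xn n) ∧ (Xn n).Nontrivial) ∧
      (∀ m n, m ≠ n → Disjoint (Xn m) (Xn n)) ∧
      Filter.Tendsto (fun n => ⨆ y : Y, Metric.infDist y (Xn n)) Filter.atTop (nhds 0) := by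
  classical
  haveI hXc : ConnectedSpace ↥X := hXconn
  obtain ⟨y₁, y₂, hy⟩ := exists_pair_ne Y
  have hr : 0 < dist y₁ y₂ := dist_pos.mpr hy
  obtain ⟨a, ha⟩ := Metric.dense_iff.mp hdense y₁ (dist y₁ y₂ / 4) (by positivity)
  obtain ⟨b, hb⟩ := Metric.dense_iff.mp hdense y₂ (dist y₁ y₂ / 4) (by positivity)
  haveI : Nontrivial ↥X := by
    refine ⟨⟨a, ha.2⟩, ⟨b, hb.2⟩, fun h => ?_⟩
    have hab : a = b := congrArg Subtype.val h
    have h1 : dist a y₁ < dist y₁ y₂ / 4 := mem_ball.mp ha.1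
    have h2 : dist b y₂ < dist y₁ y₂ / 4 := mem_ball.mp hb.1
    have h3 : dist y₁ y₂ ≤ dist y₁ a + dist a y₂ := dist_triangle _ _ _
    rw [hab] at h3
    rw [dist_comm a y₁, hab] at h1
    linarith
  have net : ∀ ε : ℝ, 0 < ε → ∃ s : Finset ↥X, ∀ z : ↥X, ∃ y ∈ s, dist z y < ε := by
    intro ε hε
    obtain ⟨t, ht⟩ := isCompact_univ.elim_finite_subcover (fun c : Y => ball c (ε / 2))
      (fun c => isOpen_ball) (fun y _ => mem_iUnion.mpr ⟨y, mem_ball_self (by positivity)⟩)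
    set F : Y → ↥X := fun c =>
      if h : (X ∩ ball c (ε / 2)).Nonempty then ⟨h.some, h.some_mem.1⟩ else ⟨a, ha.2⟩ with hF
    refine ⟨t.image F, fun z => ?_⟩
    obtain ⟨c, hc, hzc⟩ := mem_iUnion₂.mp (ht (mem_univ (↑z : Y)))
    have hcond : (X ∩ ball c (ε / 2)).Nonempty := ⟨↑z, z.2, hzc⟩
    refine ⟨F c, Finset.mem_image_of_mem F hc, ?_⟩
    have hFc : ((F c : ↥X) : Y) ∈ ball c (ε / 2) := by
      rw [hF]
      simp only [dif_pos hcond]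
      exact hcond.some_mem.2
    rw [Subtype.dist_eq]
    calc dist (↑z : Y) ↑(F c) ≤ dist (↑z : Y) c + dist c ↑(F c) := dist_triangle _ _ _
      _ < ε / 2 + ε / 2 := by
          rw [dist_comm c ((F c : ↥X) : Y)]
          exact add_lt_add (mem_ball.mp hzc) (mem_ball.mp hFc)
      _ = ε := by ring
  have hindec' : Indec ↥X := hindec
  have hsemi' : Semic ↥X := hsemi
  obtain ⟨f, hf, hdisj⟩ := Stmt4Aux.seq hindec' hsemi' net
  refine ⟨fun n => Subtype.val '' f n, ?_, ?_, ?_, ?_⟩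
  · rintro n w ⟨x, _, rfl⟩
    exact x.2
  · intro n
    refine ⟨(hf n).1.image continuous_subtype_val,
      (hf n).2.1.image _ continuous_subtype_val.continuousOn, ?_⟩
    obtain ⟨u, hu, v, hv, huv⟩ := (hf n).2.2.1
    exact ⟨↑u, ⟨u, hu, rfl⟩, ↑v, ⟨v, hv, rfl⟩, fun h => huv (Subtype.val_injective h)⟩
  · intro m n hmn
    rcases lt_or_gt_of_ne hmn with h | h
    · exact (Set.disjoint_image_iff Subtype.val_injective).mpr
        (Set.disjoint_iff_inter_eq_empty.mpr (hdisj m n h))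
    · exact ((Set.disjoint_image_iff Subtype.val_injective).mpr
        (Set.disjoint_iff_inter_eq_empty.mpr (hdisj n m h))).symm
  · have hbound : ∀ n : ℕ, ∀ y : Y, infDist y (Subtype.val '' f n) ≤ 1 / (n + 1) := by
      intro n y
      have hXn : ∀ x : ↥X, infDist (↑x : Y) (Subtype.val '' f n) ≤ 1 / (n + 1) := by
        intro x
        rw [infDist_image isometry_subtype_coe]
        exact (hf n).2.2.2 x
      apply le_of_forall_pos_le_add
      intro δ hδ
      obtain ⟨x, hx⟩ := Metric.dense_iff.mp hdense y δ hδ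
      calc infDist y (Subtype.val '' f n)
          ≤ infDist ((⟨x, hx.2⟩ : ↥X) : Y) (Subtype.val '' f n) + dist y x :=
            infDist_le_infDist_add_dist
        _ ≤ 1 / (n + 1) + δ := by
            refine add_le_add (hXn _) (le_of_lt ?_)
            rw [dist_comm]
            exact mem_ball.mp hx.1
    apply squeeze_zero (fun n => Real.iSup_nonneg fun y => infDist_nonneg)
      (fun n => Real.iSup_le (fun y => hbound n y) (by positivity))
      tendsto_one_div_add_atTop_nhds_zero_nat
end

section
/- Let X be a separable metrizable indecomposable semicontinuum with more than one point, let K_0, K_1, …, K_{n-1} be finitely many proper subcontinua of X, and let U_1, …, U_k be finitely many nonempty open subsets of X. Then the set K_0 ∪ ⋯ ∪ K_{n-1} does not disrupt {U_1, …, U_k}; that is, there exists a subcontinuum M of X with M ∩ (K_0 ∪ ⋯ ∪ K_{n-1}) = ∅ and M ∩ U_j ≠ ∅ for every j ≤ k. -/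
open Set Metric Topology

section Aux
variable {X : Type*} [TopologicalSpace X]

lemma my_ccIn_compact [T2Space X] {F : Set X} (hF : IsCompact F) (z : X) :
    IsCompact (connectedComponentIn F z) := by
  by_cases hz : z ∈ F
  · rw [connectedComponentIn_eq_image hz]
    haveI : CompactSpace F := isCompact_iff_compactSpace.mp hF
    exact (isClosed_connectedComponent.isCompact).image continuous_subtype_val
  · rw [connectedComponentIn_eq_empty hz]; exact isCompact_empty

lemma my_BL [T2Space X] {D F : Set X} (hD : IsCompact D) (hDc : IsPreconnected D)
    (hF : IsClosed F) (hFD : F ⊆ D) {z : X} (hz : z ∈ F) (hne : (D \ F).Nonempty) :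
    (connectedComponentIn F z ∩ closure (D \ F)).Nonempty := by
  by_contra hcon
  rw [Set.not_nonempty_iff_eq_empty] at hcon
  haveI : CompactSpace F := isCompact_iff_compactSpace.mp (hD.of_isClosed_subset hF hFD)
  set ζ : F := ⟨z, hz⟩ with hζ
  have hsub : connectedComponent ζ ⊆ (Subtype.val ⁻¹' (closure (D \ F))ᶜ : Set F) := by
    intro s hs
    have h1 : (s : X) ∈ connectedComponentIn F z := by
      rw [connectedComponentIn_eq_image hz]; exact ⟨s, hs, rfl⟩
    intro hmem
    have : (s : X) ∈ connectedComponentIn F z ∩ closure (D \ F) := ⟨h1, hmem⟩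
    rw [hcon] at this; exact this
  have hiInter := connectedComponent_eq_iInter_isClopen ζ
  -- compactness argument
  have hAcomp : IsCompact (Subtype.val ⁻¹' (closure (D \ F)) : Set F) :=
    (isClosed_closure.preimage continuous_subtype_val).isCompact
  have hclosed : ∀ s : { s : Set F // IsClopen s ∧ ζ ∈ s }, IsClosed (s : Set F) :=
    fun s => s.2.1.1
  have hdisj : ((Subtype.val ⁻¹' (closure (D \ F)) : Set F) ∩
      ⋂ s : { s : Set F // IsClopen s ∧ ζ ∈ s }, (s : Set F)) = ∅ := by
    rw [← hiInter]
    apply Set.eq_empty_of_forall_notMem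
    rintro s ⟨h1, h2⟩
    exact hsub h2 h1
  obtain ⟨u, hu⟩ := hAcomp.elim_finite_subfamily_closed _ hclosed hdisj
  set Z : Set F := ⋂ s ∈ u, (s : Set F) with hZ
  have hZclopen : IsClopen Z := isClopen_biInter_finset (fun s _ => s.2.1)
  have hζZ : ζ ∈ Z := mem_iInter₂.mpr fun s _ => s.2.2
  have hZG : Z ⊆ (Subtype.val ⁻¹' (closure (D \ F))ᶜ : Set F) := by
    intro s hsZ hmem
    have : s ∈ (Subtype.val ⁻¹' (closure (D \ F)) : Set F) ∩ ⋂ t ∈ u, (t : Set F) :=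
      ⟨hmem, hsZ⟩
    rw [hu] at this; exact this
  obtain ⟨O₁, hO₁open, hO₁⟩ := isOpen_induced_iff.mp hZclopen.2
  -- the image
  set W : Set X := Subtype.val '' Z with hW
  have hWclosed : IsClosed W :=
    (hZclopen.1.isCompact.image continuous_subtype_val).isClosed
  have hWeq : W = D ∩ (O₁ ∩ (closure (D \ F))ᶜ) := by
    apply Set.Subset.antisymm
    · rintro y ⟨s, hsZ, rfl⟩
      refine ⟨hFD s.2, ?_, ?_⟩
      · have : s ∈ Subtype.val ⁻¹' O₁ := by rw [hO₁]; exact hsZ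
        exact this
      · exact hZG hsZ
    · rintro y ⟨hyD, hyO, hyc⟩
      have hyF : y ∈ F := by
        by_contra h
        exact hyc (subset_closure ⟨hyD, h⟩)
      refine ⟨⟨y, hyF⟩, ?_, rfl⟩
      rw [← hO₁]; exact hyO
  obtain ⟨w, hw⟩ := hne
  have := hDc (O₁ ∩ (closure (D \ F))ᶜ) Wᶜ
    (hO₁open.inter isClosed_closure.isOpen_compl) hWclosed.isOpen_compl
    (by
      intro y hyD
      by_cases h : y ∈ W
      · left; rw [hWeq] at h; exact h.2
      · right; exact h)
    ⟨z, hFD hz, by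
      have : z ∈ W := ⟨ζ, hζZ, rfl⟩
      rw [hWeq] at this; exact this.2⟩
    ⟨w, hw.1, by
      intro hwW
      have : w ∈ F := by rw [hW] at hwW; obtain ⟨s, _, rfl⟩ := hwW; exact s.2
      exact hw.2 this⟩
  obtain ⟨p, hpD, hpu, hpv⟩ := this
  exact hpv (by rw [hWeq]; exact ⟨hpD, hpu⟩)

lemma my_FLn [ConnectedSpace X] [Nontrivial X]
    (hindec : ¬ ∃ A B : Set X, IsClosed A ∧ IsConnected A ∧ A ≠ Set.univ ∧
      IsClosed B ∧ IsConnected B ∧ B ≠ Set.univ ∧ A ∪ B = Set.univ) :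
    ∀ (m : ℕ) (F : Finset (Set X)), F.card ≤ m →
      (∀ A ∈ F, IsClosed A ∧ IsPreconnected A ∧ A.Nonempty ∧ A ≠ Set.univ) →
      ⋃₀ (F : Set (Set X)) ≠ Set.univ := by
  intro m
  induction m with
  | zero =>
    intro F hc _ hcover
    have hF : F = ∅ := Finset.card_eq_zero.mp (le_antisymm hc (Nat.zero_le _))
    subst hF
    obtain ⟨x⟩ := (inferInstance : Nonempty X)
    have : x ∈ ⋃₀ ((∅ : Finset (Set X)) : Set (Set X)) := hcover ▸ mem_univ x
    simp at this
  | succ m ih =>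
    intro F hc hprops hcover
    classical
    by_cases hpair : ∃ A ∈ F, ∃ B ∈ F, A ≠ B ∧ (A ∩ B).Nonempty
    · obtain ⟨A, hA, B, hB, hAB, ⟨x0, hx0A, hx0B⟩⟩ := hpair
      have hcard2 : 1 < F.card := Finset.one_lt_card.mpr ⟨A, hA, B, hB, hAB⟩
      set F' : Finset (Set X) := insert (A ∪ B) ((F.erase A).erase B) with hF'
      have hBmem : B ∈ F.erase A := Finset.mem_erase.mpr ⟨fun h => hAB h.symm, hB⟩
      have hcard' : F'.card ≤ m := by
        have h1 : F'.card ≤ ((F.erase A).erase B).card + 1 := by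
          rw [hF']; exact Finset.card_insert_le _ _
        have h2 : ((F.erase A).erase B).card = F.card - 1 - 1 := by
          rw [Finset.card_erase_of_mem hBmem, Finset.card_erase_of_mem hA]
        omega
      have hAprops := hprops A hA
      have hBprops := hprops B hB
      have hUprops : IsClosed (A ∪ B) ∧ IsPreconnected (A ∪ B) ∧ (A ∪ B).Nonempty ∧
          A ∪ B ≠ Set.univ := by
        refine ⟨hAprops.1.union hBprops.1,
          IsPreconnected.union x0 hx0A hx0B hAprops.2.1 hBprops.2.1,
          hAprops.2.2.1.mono subset_union_left, fun huniv => ?_⟩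
        exact hindec ⟨A, B, hAprops.1, ⟨hAprops.2.2.1, hAprops.2.1⟩, hAprops.2.2.2,
          hBprops.1, ⟨hBprops.2.2.1, hBprops.2.1⟩, hBprops.2.2.2, huniv⟩
      refine ih F' hcard' ?_ ?_
      · intro C hC
        rcases Finset.mem_insert.mp hC with h | h
        · subst h; exact hUprops
        · exact hprops C (Finset.mem_of_mem_erase (Finset.mem_of_mem_erase h))
      · rw [← hcover]
        ext x
        simp only [Set.mem_sUnion, Finset.mem_coe]
        constructor
        · rintro ⟨C, hC, hxC⟩
          rcases Finset.mem_insert.mp hC with h | h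
          · subst h
            rcases hxC with h | h
            exacts [⟨A, hA, h⟩, ⟨B, hB, h⟩]
          · exact ⟨C, Finset.mem_of_mem_erase (Finset.mem_of_mem_erase h), hxC⟩
        · rintro ⟨C, hC, hxC⟩
          by_cases h1 : C = A
          · exact ⟨A ∪ B, Finset.mem_insert_self _ _, Or.inl (h1 ▸ hxC)⟩
          by_cases h2 : C = B
          · exact ⟨A ∪ B, Finset.mem_insert_self _ _, Or.inr (h2 ▸ hxC)⟩
          · exact ⟨C, Finset.mem_insert_of_mem
              (Finset.mem_erase.mpr ⟨h2, Finset.mem_erase.mpr ⟨h1, hC⟩⟩), hxC⟩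
    · push_neg at hpair
      rcases F.eq_empty_or_nonempty with hF | ⟨A, hA⟩
      · subst hF
        obtain ⟨x⟩ := (inferInstance : Nonempty X)
        have : x ∈ ⋃₀ ((∅ : Finset (Set X)) : Set (Set X)) := hcover ▸ mem_univ x
        simp at this
      · have hAprops := hprops A hA
        have hcompl : Aᶜ = ⋃₀ ((F.erase A : Finset (Set X)) : Set (Set X)) := by
          ext x
          constructor
          · intro hx
            have : x ∈ ⋃₀ (F : Set (Set X)) := hcover ▸ mem_univ x
            obtain ⟨B, hB, hxB⟩ := this
            have hBA : B ≠ A := fun h => hx (h ▸ hxB)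
            exact ⟨B, Finset.mem_coe.mpr (Finset.mem_erase.mpr ⟨hBA, hB⟩), hxB⟩
          · rintro ⟨B, hB, hxB⟩ hxA
            have hB' := Finset.mem_erase.mp (Finset.mem_coe.mp hB)
            have h0 := hpair A hA B hB'.2 (fun h => hB'.1 h.symm)
            exact absurd (h0 ▸ (⟨hxA, hxB⟩ : x ∈ A ∩ B)) (notMem_empty x)
        have hopen : IsOpen A := by
          rw [← isClosed_compl_iff, hcompl]
          rw [Set.sUnion_eq_biUnion]
          exact (F.erase A).finite_toSet.isClosed_biUnion
            (fun B hB => (hprops B (Finset.mem_of_mem_erase (Finset.mem_coe.mp hB))).1)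
        exact hAprops.2.2.2 (IsClopen.eq_univ ⟨hAprops.1, hopen⟩ hAprops.2.2.1)

lemma my_ND [ConnectedSpace X]
    (hindec : ¬ ∃ A B : Set X, IsClosed A ∧ IsConnected A ∧ A ≠ Set.univ ∧
      IsClosed B ∧ IsConnected B ∧ B ≠ Set.univ ∧ A ∪ B = Set.univ)
    {A : Set X} (hAcl : IsClosed A) (hApc : IsPreconnected A) (hAne : A.Nonempty)
    (hAuniv : A ≠ Set.univ) : interior A = ∅ := by
  by_contra hint
  obtain ⟨x, hx⟩ := Set.nonempty_iff_ne_empty.mpr hint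
  set W := Aᶜ with hWdef
  have hWopen : IsOpen W := hAcl.isOpen_compl
  have hWne : W.Nonempty := by
    rcases Set.eq_empty_or_nonempty W with h | h
    · exact absurd (compl_empty_iff.mp h) hAuniv
    · exact h
  set R := closure W with hRdef
  have hWR : W ⊆ R := subset_closure
  have hRcl : IsClosed R := isClosed_closure
  have hRne : R.Nonempty := hWne.mono hWR
  have hxR : x ∉ R := by
    intro hxR
    rw [_root_.mem_closure_iff] at hxR
    obtain ⟨y, hy1, hy2⟩ := hxR (interior A) isOpen_interior hx
    exact hy2 (interior_subset hy1)
  have hcover : A ∪ R = Set.univ := by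
    ext y
    simp only [mem_union, mem_univ, iff_true]
    by_cases h : y ∈ A
    · exact Or.inl h
    · exact Or.inr (hWR h)
  have hRA : ∀ y ∈ R, y ∉ A → y ∈ W := fun y _ hy => hy
  by_cases hR : IsPreconnected R
  · exact hindec ⟨A, R, hAcl, ⟨hAne, hApc⟩, hAuniv, hRcl, ⟨hRne, hR⟩,
      fun h => hxR (h ▸ mem_univ x), hcover⟩
  · rw [IsPreconnected] at hR
    push_neg at hR
    obtain ⟨u, v, hu, hv, hcov, hru, hrv, hdisj⟩ := hR
    set P := R \ v with hPdef
    set Q := R \ u with hQdef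
    have hPcl : IsClosed P := by rw [hPdef, diff_eq]; exact hRcl.inter hv.isClosed_compl
    have hQcl : IsClosed Q := by rw [hQdef, diff_eq]; exact hRcl.inter hu.isClosed_compl
    have hPQ : P ∪ Q = R := by
      ext r
      constructor
      · rintro (h | h) <;> exact h.1
      · intro hr
        rcases hcov hr with h | h
        · left
          exact ⟨hr, fun hrv' => (Set.eq_empty_iff_forall_notMem.mp hdisj r) ⟨hr, h, hrv'⟩⟩
        · right
          exact ⟨hr, fun hru' => (Set.eq_empty_iff_forall_notMem.mp hdisj r) ⟨hr, hru', h⟩⟩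
    have hPQdisj : P ∩ Q = ∅ := by
      ext r
      simp only [mem_inter_iff, mem_empty_iff_false, iff_false, not_and]
      rintro ⟨hr, hrv'⟩ ⟨_, hru'⟩
      rcases hcov hr with h | h
      exacts [hru' h, hrv' h]
    have hPne : P.Nonempty := by
      obtain ⟨r, hr, hru'⟩ := hru
      exact ⟨r, hr, fun hrv' => (Set.eq_empty_iff_forall_notMem.mp hdisj r) ⟨hr, hru', hrv'⟩⟩
    have hQne : Q.Nonempty := by
      obtain ⟨r, hr, hrv'⟩ := hrv
      exact ⟨r, hr, fun hru' => (Set.eq_empty_iff_forall_notMem.mp hdisj r) ⟨hr, hru', hrv'⟩⟩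
    -- each of P, Q meets W
    have hmeet : ∀ P' Q' : Set X, P' ∪ Q' = R → P' ∩ Q' = ∅ → IsClosed P' →
        Q'.Nonempty → (Q' ∩ W).Nonempty := by
      intro P' Q' hun hdis hP'cl hQ'ne
      by_contra h
      rw [Set.not_nonempty_iff_eq_empty] at h
      have hWP : W ⊆ P' := by
        intro w hw
        have : w ∈ P' ∪ Q' := hun.symm ▸ hWR hw
        rcases this with h' | h'
        · exact h'
        · exact absurd (h ▸ (⟨h', hw⟩ : w ∈ Q' ∩ W)) (notMem_empty w)
      have hRP : R ⊆ P' := closure_minimal hWP hP'cl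
      obtain ⟨q, hq⟩ := hQ'ne
      have : q ∈ P' := hRP (hun ▸ Or.inr hq)
      exact absurd (hdis ▸ (⟨this, hq⟩ : q ∈ P' ∩ Q')) (notMem_empty q)
    -- the connectedness claim
    have conn : ∀ P' Q' : Set X, IsClosed P' → IsClosed Q' → P' ∪ Q' = R → P' ∩ Q' = ∅ →
        IsPreconnected (A ∪ P') := by
      intro P' Q' hP'cl hQ'cl hunion hdisj'
      intro u' v' hu' hv' hcov' hne1 hne2
      by_contra hno
      rw [Set.not_nonempty_iff_eq_empty] at hno
      have main : ∀ a b : Set X, IsOpen a → IsOpen b → (A ∪ P') ⊆ a ∪ b → A ⊆ a →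
          ((A ∪ P') ∩ b).Nonempty → ((A ∪ P') ∩ (a ∩ b)) = ∅ → False := by
        intro a b ha hb hcovab hAa hneb hnoab
        set S := (A ∪ P') \ a with hSdef
        have hScl : IsClosed S := by
          rw [hSdef, diff_eq]; exact (hAcl.union hP'cl).inter ha.isClosed_compl
        have hSne : S.Nonempty := by
          obtain ⟨s, hs1, hs2⟩ := hneb
          exact ⟨s, hs1, fun hsa =>
            absurd (hnoab ▸ (⟨hs1, hsa, hs2⟩ : s ∈ (A ∪ P') ∩ (a ∩ b))) (notMem_empty s)⟩
        have hSP : S ⊆ P' := by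
          rintro s ⟨hs1, hs2⟩
          rcases hs1 with h | h
          · exact absurd (hAa h) hs2
          · exact h
        have hSA : ∀ s ∈ S, s ∉ A := fun s hs hsA => hs.2 (hAa hsA)
        have hSeq : S = b ∩ W ∩ Q'ᶜ := by
          ext s
          constructor
          · intro hs
            refine ⟨⟨(hcovab hs.1).resolve_left hs.2, hSA s hs⟩, fun hsQ => ?_⟩
            exact absurd (hdisj' ▸ (⟨hSP hs, hsQ⟩ : s ∈ P' ∩ Q')) (notMem_empty s)
          · rintro ⟨⟨hsb, hsW⟩, hsQ⟩
            have hsR : s ∈ R := hWR hsW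
            have hsP : s ∈ P' := by
              have : s ∈ P' ∪ Q' := hunion.symm ▸ hsR
              exact this.resolve_right hsQ
            refine ⟨Or.inr hsP, fun hsa => ?_⟩
            exact absurd (hnoab ▸ (⟨Or.inr hsP, hsa, hsb⟩ : s ∈ (A ∪ P') ∩ (a ∩ b)))
              (notMem_empty s)
        have hSopen : IsOpen S := by
          rw [hSeq]; exact (hb.inter hWopen).inter hQ'cl.isOpen_compl
        have hSuniv : S = Set.univ := IsClopen.eq_univ ⟨hScl, hSopen⟩ hSne
        obtain ⟨a0, ha0⟩ := hAne
        exact hSA a0 (hSuniv ▸ mem_univ a0) ha0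
      by_cases h1 : (A ∩ u').Nonempty
      · by_cases h2 : (A ∩ v').Nonempty
        · obtain ⟨p, hp⟩ := hApc u' v' hu' hv'
            ((subset_union_left : A ⊆ A ∪ P').trans hcov') h1 h2
          exact absurd (hno ▸ (⟨Or.inl hp.1, hp.2⟩ : p ∈ (A ∪ P') ∩ (u' ∩ v')))
            (notMem_empty p)
        · have hAu' : A ⊆ u' := by
            intro a ha
            rcases hcov' (Or.inl ha) with h | h
            · exact h
            · exact absurd ⟨a, ha, h⟩ h2
          exact main u' v' hu' hv' hcov' hAu' hne2 hno
      · have hAv' : A ⊆ v' := by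
          intro a ha
          rcases hcov' (Or.inl ha) with h | h
          · exact absurd ⟨a, ha, h⟩ h1
          · exact h
        refine main v' u' hv' hu' (by rwa [union_comm v' u']) hAv' hne1 ?_
        rwa [inter_comm v' u']
    have hQW := hmeet P Q hPQ hPQdisj hPcl hQne
    have hPW := hmeet Q P (by rwa [union_comm]) (by rwa [inter_comm]) hQcl hPne
    obtain ⟨q, hqQ, hqW⟩ := hQW
    obtain ⟨p, hpP, hpW⟩ := hPW
    refine hindec ⟨A ∪ P, A ∪ Q, hAcl.union hPcl,
      ⟨hAne.mono subset_union_left, conn P Q hPcl hQcl hPQ hPQdisj⟩, ?_,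
      hAcl.union hQcl,
      ⟨hAne.mono subset_union_left, conn Q P hQcl hPcl (by rwa [union_comm]) (by rwa [inter_comm])⟩,
      ?_, ?_⟩
    · intro h
      have : q ∈ A ∪ P := h ▸ mem_univ q
      rcases this with h' | h'
      · exact hqW h'
      · exact absurd (hPQdisj ▸ (⟨h', hqQ⟩ : q ∈ P ∩ Q)) (notMem_empty q)
    · intro h
      have : p ∈ A ∪ Q := h ▸ mem_univ p
      rcases this with h' | h'
      · exact hpW h'
      · exact absurd (hPQdisj ▸ (⟨hpP, h'⟩ : p ∈ P ∩ Q)) (notMem_empty p)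
    · rw [Set.union_union_union_comm, union_self, hPQ]
      exact hcover

lemma my_int_union {A B : Set X} (hA : IsClosed A) (hAi : interior A = ∅)
    (hBi : interior B = ∅) : interior (A ∪ B) = ∅ := by
  have hopen : IsOpen (interior (A ∪ B) \ A) := isOpen_interior.sdiff hA
  have hsub : interior (A ∪ B) \ A ⊆ B := fun y hy =>
    (interior_subset hy.1).resolve_left hy.2
  have h1 : interior (A ∪ B) \ A ⊆ interior B := interior_maximal hsub hopen
  rw [hBi] at h1
  have h2 : interior (A ∪ B) ⊆ A := by
    intro y hy
    by_contra h
    exact absurd (h1 ⟨hy, h⟩) (notMem_empty y)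
  have h3 : interior (A ∪ B) ⊆ interior A := interior_maximal h2 isOpen_interior
  rw [hAi] at h3
  exact Set.eq_empty_iff_forall_notMem.mpr (fun x hx => h3 hx)

def clsOf (N : Set X) (z : X) : Set X :=
  {y | ∃ C : Set X, IsCompact C ∧ IsPreconnected C ∧ C ∩ N = ∅ ∧ z ∈ C ∧ y ∈ C}

lemma clsOf_preconnected (N : Set X) (z : X) : IsPreconnected (clsOf N z) := by
  have : clsOf N z = ⋃₀ {C : Set X | IsCompact C ∧ IsPreconnected C ∧ C ∩ N = ∅ ∧ z ∈ C} := by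
    ext y
    simp only [clsOf, mem_setOf_eq, mem_sUnion]
    constructor
    · rintro ⟨C, h1, h2, h3, h4, h5⟩; exact ⟨C, ⟨h1, h2, h3, h4⟩, h5⟩
    · rintro ⟨C, ⟨h1, h2, h3, h4⟩, h5⟩; exact ⟨C, h1, h2, h3, h4, h5⟩
  rw [this]
  exact isPreconnected_sUnion z _ (fun s hs => hs.2.2.2) (fun s hs => hs.2.1)

lemma clsOf_inter_N (N : Set X) (z : X) : clsOf N z ∩ N = ∅ := by
  ext y
  simp only [mem_inter_iff, mem_empty_iff_false, iff_false, not_and]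
  rintro ⟨C, _, _, h3, _, h5⟩ hyN
  exact absurd (h3 ▸ (⟨h5, hyN⟩ : y ∈ C ∩ N)) (notMem_empty y)

lemma mem_clsOf_self {N : Set X} {z : X} (hz : z ∉ N) : z ∈ clsOf N z :=
  ⟨{z}, isCompact_singleton, isPreconnected_singleton,
    Set.singleton_inter_eq_empty.mpr hz, rfl, rfl⟩


end Aux

section MetricAux
variable {X : Type*} [MetricSpace X]

lemma my_NTC [Nontrivial X]
    (hsemi : ∀ x y : X, ∃ K : Set X,
      IsCompact K ∧ IsConnected K ∧ K.Nontrivial ∧ x ∈ K ∧ y ∈ K)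
    {O : Set X} (hO : IsOpen O) (hOne : O.Nonempty) :
    ∃ G : Set X, IsCompact G ∧ IsPreconnected G ∧ G.Nontrivial ∧ G ⊆ O := by
  obtain ⟨x, hx⟩ := hOne
  obtain ⟨ε, hε, hball⟩ := Metric.isOpen_iff.mp hO x hx
  obtain ⟨y, hy⟩ := exists_ne x
  obtain ⟨C, hCc, hCconn, hCnt, hxC, hyC⟩ := hsemi x y
  have hhalf : (0:ℝ) < ε/2 := by linarith
  by_cases hsub : C ⊆ closedBall x (ε/2)
  · exact ⟨C, hCc, hCconn.2, hCnt,
      hsub.trans ((closedBall_subset_ball (by linarith)).trans hball)⟩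
  · rw [Set.not_subset] at hsub
    obtain ⟨c, hcC, hcB⟩ := hsub
    set F := C ∩ closedBall x (ε/2) with hFdef
    have hFcl : IsClosed F := hCc.isClosed.inter Metric.isClosed_closedBall
    have hxF : x ∈ F := ⟨hxC, mem_closedBall_self (le_of_lt hhalf)⟩
    have hne : (C \ F).Nonempty := ⟨c, hcC, fun h => hcB h.2⟩
    obtain ⟨p, hp1, hp2⟩ := my_BL hCc hCconn.2 hFcl inter_subset_left hxF hne
    refine ⟨connectedComponentIn F x, my_ccIn_compact (hCc.inter_right Metric.isClosed_closedBall) x,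
      isPreconnected_connectedComponentIn, ⟨x, mem_connectedComponentIn hxF, p, hp1, ?_⟩,
      (connectedComponentIn_subset F x).trans
        ((inter_subset_right).trans ((closedBall_subset_ball (by linarith)).trans hball))⟩
    -- x ≠ p
    have hsubcl : closure (C \ F) ⊆ {q : X | ε/2 ≤ dist q x} := by
      apply closure_minimal
      · rintro q ⟨hqC, hqF⟩
        have : q ∉ closedBall x (ε/2) := fun h => hqF ⟨hqC, h⟩
        exact le_of_not_ge (fun h => this (mem_closedBall.mpr h))
      · exact isClosed_le continuous_const (continuous_id.dist continuous_const)
    have : ε/2 ≤ dist p x := hsubcl hp2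
    intro hxp
    rw [← hxp, dist_self] at this
    linarith

lemma my_dagger
    (hsemi : ∀ x y : X, ∃ K : Set X,
      IsCompact K ∧ IsConnected K ∧ K.Nontrivial ∧ x ∈ K ∧ y ∈ K)
    {N : Set X} (hNcl : IsClosed N) (hNne : N.Nonempty)
    {z w : X} (hzN : z ∉ N) (hw : w ∉ clsOf N z) :
    (closure (clsOf N z) ∩ N).Nonempty := by
  obtain ⟨H, hHc, hHconn, _, hzH, hwH⟩ := hsemi z w
  have hHN : (H ∩ N).Nonempty := by
    by_contra h
    rw [Set.not_nonempty_iff_eq_empty] at h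
    exact hw ⟨H, hHc, hHconn.2, h, hzH, hwH⟩
  set d := infDist z N with hd
  have hdpos : 0 < d := by
    rcases eq_or_lt_of_le (infDist_nonneg : (0:ℝ) ≤ infDist z N) with h | h
    · exfalso
      have : z ∈ closure N := (mem_closure_iff_infDist_zero hNne).mpr h.symm
      rw [hNcl.closure_eq] at this
      exact hzN this
    · exact h
  have hrpos : ∀ m : ℕ, 0 < d / (m + 1) := by
    intro m; positivity
  have hrle : ∀ m : ℕ, d / (m + 1) ≤ d := by
    intro m
    rw [div_le_iff₀ (by positivity)]
    nlinarith [Nat.cast_nonneg (α := ℝ) m]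
  set F : ℕ → Set X := fun m => H ∩ {p | d / (m + 1) ≤ infDist p N} with hF
  have hFcl : ∀ m, IsClosed (F m) := fun m =>
    hHc.isClosed.inter (isClosed_le continuous_const (continuous_infDist_pt N))
  have hFsub : ∀ m, F m ⊆ H := fun m => inter_subset_left
  have hzF : ∀ m, z ∈ F m := fun m => ⟨hzH, by
    show d / (m + 1) ≤ infDist z N
    rw [← hd]; exact hrle m⟩
  have hDFne : ∀ m, (H \ F m).Nonempty := by
    intro m
    obtain ⟨q, hqH, hqN⟩ := hHN
    refine ⟨q, hqH, fun hqF => ?_⟩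
    have h1 : d / (m + 1) ≤ infDist q N := hqF.2
    rw [infDist_zero_of_mem hqN] at h1
    exact absurd h1 (not_le.mpr (hrpos m))
  have hEcls : ∀ m, connectedComponentIn (F m) z ⊆ clsOf N z := by
    intro m y hy
    refine ⟨connectedComponentIn (F m) z,
      my_ccIn_compact (hHc.inter_right (isClosed_le continuous_const (continuous_infDist_pt N))) z,
      isPreconnected_connectedComponentIn, ?_, mem_connectedComponentIn (hzF m), hy⟩
    ext p
    simp only [mem_inter_iff, mem_empty_iff_false, iff_false, not_and]
    intro hp hpN
    have h1 : d / (m + 1) ≤ infDist p N := (connectedComponentIn_subset (F m) z hp).2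
    rw [infDist_zero_of_mem hpN] at h1
    exact absurd h1 (not_le.mpr (hrpos m))
  set Φ : ℕ → Set X := fun m => (closure (clsOf N z) ∩ H) ∩ {p | infDist p N ≤ d / (m + 1)}
    with hΦ
  have hΦcl : ∀ m, IsClosed (Φ m) := fun m =>
    (isClosed_closure.inter hHc.isClosed).inter
      (isClosed_le (continuous_infDist_pt N) continuous_const)
  have hΦne : ∀ m, (Φ m).Nonempty := by
    intro m
    obtain ⟨p, hp1, hp2⟩ := my_BL hHc hHconn.2 (hFcl m) (hFsub m) (hzF m) (hDFne m)
    refine ⟨p, ⟨subset_closure (hEcls m hp1), ?_⟩, ?_⟩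
    · have : closure (H \ F m) ⊆ H := by
        apply closure_minimal diff_subset hHc.isClosed
      exact this hp2
    · have hsub2 : closure (H \ F m) ⊆ {p : X | infDist p N ≤ d / (m + 1)} := by
        apply closure_minimal
        · rintro q ⟨hqH, hqF⟩
          have : ¬ d / (m + 1) ≤ infDist q N := fun h => hqF ⟨hqH, h⟩
          exact le_of_lt (not_le.mp this)
        · exact isClosed_le (continuous_infDist_pt N) continuous_const
      exact hsub2 hp2
  have hΦdec : ∀ m : ℕ, Φ (m + 1) ⊆ Φ m := by
    intro m p hp
    refine ⟨hp.1, ?_⟩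
    show infDist p N ≤ d / ((m : ℝ) + 1)
    refine le_trans hp.2 ?_
    show d / ((m + 1 : ℕ) + 1 : ℝ) ≤ d / ((m : ℝ) + 1)
    apply div_le_div_of_nonneg_left hdpos.le (by positivity)
    push_cast
    linarith
  have hΦcpt : IsCompact (Φ 0) :=
    hHc.of_isClosed_subset (hΦcl 0) (fun p hp => hp.1.2)
  obtain ⟨p, hp⟩ := IsCompact.nonempty_iInter_of_sequence_nonempty_isCompact_isClosed Φ
    hΦdec hΦne hΦcpt hΦcl
  have hpm : ∀ m : ℕ, infDist p N ≤ d / (m + 1) := fun m => (mem_iInter.mp hp m).2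
  have hp0 : infDist p N = 0 := by
    by_contra h
    have hpos : 0 < infDist p N := lt_of_le_of_ne infDist_nonneg (Ne.symm h)
    obtain ⟨m, hm⟩ := exists_nat_gt (d / infDist p N)
    rw [div_lt_iff₀ hpos] at hm
    have h1 := hpm m
    have h3 : d / ((m : ℝ) + 1) < infDist p N := by
      rw [div_lt_iff₀ (by positivity)]
      nlinarith
    linarith
  refine ⟨p, (mem_iInter.mp hp 0).1.1, ?_⟩
  have : p ∈ closure N := (mem_closure_iff_infDist_zero hNne).mpr hp0
  rwa [hNcl.closure_eq] at this

end MetricAux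

/-- Let `X` be a separable metrizable indecomposable semicontinuum with more
than one point, let `K 0, …, K (n-1)` be finitely many proper subcontinua of `X`, and let
`U 1, …, U k` be finitely many nonempty open subsets of `X`. Then `⋃ i, K i` does not disrupt
`{U j}`: there is a subcontinuum `M` of `X` disjoint from `⋃ i, K i` meeting every `U j`. -/
theorem stmt_6 {X : Type*} [TopologicalSpace X] [TopologicalSpace.MetrizableSpace X]
    [TopologicalSpace.SeparableSpace X] [ConnectedSpace X] [Nontrivial X]
    (hsemi : ∀ x y : X, ∃ K : Set X,
      IsCompact K ∧ IsConnected K ∧ K.Nontrivial ∧ x ∈ K ∧ y ∈ K)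
    (hindec : ¬ ∃ A B : Set X,
      IsClosed A ∧ IsConnected A ∧ A ≠ Set.univ ∧
      IsClosed B ∧ IsConnected B ∧ B ≠ Set.univ ∧ A ∪ B = Set.univ)
    (n k : ℕ) (K : Fin n → Set X)
    (hK : ∀ i, IsCompact (K i) ∧ IsConnected (K i) ∧ (K i).Nontrivial ∧ K i ≠ Set.univ)
    (U : Fin k → Set X) (hU : ∀ j, IsOpen (U j) ∧ (U j).Nonempty) :
    ∃ M : Set X, IsCompact M ∧ IsConnected M ∧ M.Nontrivial ∧
      M ∩ (⋃ i, K i) = ∅ ∧ ∀ j, (M ∩ U j).Nonempty := by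
  classical
  letI : MetricSpace X := TopologicalSpace.metrizableSpaceMetric X
  set N : Set X := ⋃ i, K i with hNdef
  have hNcpt : IsCompact N := isCompact_iUnion (fun i => (hK i).1)
  have hNcl : IsClosed N := hNcpt.isClosed
  have hKint : ∀ i, interior (K i) = ∅ := fun i =>
    my_ND hindec (hK i).1.isClosed (hK i).2.1.2 (hK i).2.1.1 (hK i).2.2.2
  have hNint : interior N = ∅ := by
    have key : ∀ s : Finset (Fin n), interior (⋃ i ∈ s, K i) = ∅ := by
      intro s
      induction s using Finset.induction_on with
      | empty => simp
      | @insert a s ha ih =>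
        rw [Finset.set_biUnion_insert]
        exact my_int_union (hK a).1.isClosed (hKint a) ih
    have h1 := key Finset.univ
    have h2 : ⋃ i ∈ Finset.univ, K i = N := by
      rw [hNdef]; simp
    rwa [h2] at h1
  have hNne_univ : N ≠ Set.univ := by
    intro h
    rw [h, interior_univ] at hNint
    exact (Set.univ_nonempty (α := X)).ne_empty hNint
  have hNcne : Nᶜ.Nonempty := Set.nonempty_compl.mpr hNne_univ
  have hUN : ∀ j, (U j \ N).Nonempty := by
    intro j
    rcases Set.eq_empty_or_nonempty (U j \ N) with h | h
    · exfalso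
      have hsub : U j ⊆ N := by
        intro u hu
        by_contra hun
        exact absurd (h ▸ (⟨hu, hun⟩ : u ∈ U j \ N)) (notMem_empty u)
      have : U j ⊆ interior N := interior_maximal hsub (hU j).1
      rw [hNint] at this
      exact absurd (this ((hU j).2.some_mem)) (notMem_empty _)
    · exact h
  rcases Nat.eq_zero_or_pos k with hk0 | hkpos
  · -- no open sets: just need a nontrivial continuum avoiding N
    obtain ⟨G, hG1, hG2, hG3, hG4⟩ := my_NTC hsemi hNcl.isOpen_compl hNcne
    refine ⟨G, hG1, ⟨hG3.nonempty, hG2⟩, hG3, ?_, fun j => absurd j.isLt (by omega)⟩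
    ext p
    simp only [mem_inter_iff, mem_empty_iff_false, iff_false, not_and]
    exact fun hp hpN => hG4 hp hpN
  · by_cases hcase : ∃ z, z ∉ N ∧ ∀ j, (clsOf N z ∩ U j).Nonempty
    · obtain ⟨z, hzN, hzj⟩ := hcase
      have hchoice : ∀ j, ∃ C : Set X, IsCompact C ∧ IsPreconnected C ∧ C ∩ N = ∅ ∧
          z ∈ C ∧ (C ∩ U j).Nonempty := by
        intro j
        obtain ⟨y, hy1, hy2⟩ := hzj j
        obtain ⟨C, h1, h2, h3, h4, h5⟩ := hy1
        exact ⟨C, h1, h2, h3, h4, ⟨y, h5, hy2⟩⟩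
      choose C hC1 hC2 hC3 hC4 hC5 using hchoice
      set M0 : Set X := ⋃ j, C j with hM0
      have hM0c : IsCompact M0 := isCompact_iUnion hC1
      have hM0pc : IsPreconnected M0 := by
        rw [hM0, ← sUnion_range]
        exact isPreconnected_sUnion z _ (Set.forall_mem_range.mpr hC4)
          (Set.forall_mem_range.mpr hC2)
      have hM0N : M0 ∩ N = ∅ := by
        ext p
        simp only [mem_inter_iff, mem_empty_iff_false, iff_false, not_and]
        intro hp hpN
        obtain ⟨j, hj⟩ := mem_iUnion.mp hp
        exact absurd ((hC3 j) ▸ (⟨hj, hpN⟩ : p ∈ C j ∩ N)) (notMem_empty p)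
      by_cases hnt : M0.Nontrivial
      · refine ⟨M0, hM0c, ⟨⟨z, mem_iUnion.mpr ⟨⟨0, hkpos⟩, hC4 ⟨0, hkpos⟩⟩⟩, hM0pc⟩, hnt,
          hM0N, fun j => ?_⟩
        obtain ⟨y, hy1, hy2⟩ := hC5 j
        exact ⟨y, mem_iUnion.mpr ⟨j, hy1⟩, hy2⟩
      · rw [Set.not_nontrivial_iff] at hnt
        have hzM0 : z ∈ M0 := mem_iUnion.mpr ⟨⟨0, hkpos⟩, hC4 ⟨0, hkpos⟩⟩
        have hzU : ∀ j, z ∈ U j := by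
          intro j
          obtain ⟨y, hy1, hy2⟩ := hC5 j
          have : y = z := hnt (mem_iUnion.mpr ⟨j, hy1⟩) hzM0
          rwa [this] at hy2
        have hOopen : IsOpen ((⋂ j, U j) ∩ Nᶜ) :=
          (isOpen_iInter_of_finite (fun j => (hU j).1)).inter hNcl.isOpen_compl
        have hOne : ((⋂ j, U j) ∩ Nᶜ).Nonempty := ⟨z, mem_iInter.mpr hzU, hzN⟩
        obtain ⟨G, hG1, hG2, hG3, hG4⟩ := my_NTC hsemi hOopen hOne
        refine ⟨G, hG1, ⟨hG3.nonempty, hG2⟩, hG3, ?_, fun j => ?_⟩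
        · ext p
          simp only [mem_inter_iff, mem_empty_iff_false, iff_false, not_and]
          exact fun hp hpN => (hG4 hp).2 hpN
        · obtain ⟨g, hg⟩ := hG3.nonempty
          exact ⟨g, hg, mem_iInter.mp (hG4 hg).1 j⟩
    · exfalso
      push_neg at hcase
      have hcase' : ∀ z, z ∉ N → ∃ j, clsOf N z ∩ U j = ∅ := by
        intro z hz
        obtain ⟨j, hj⟩ := hcase z hz
        exact ⟨j, hj⟩
      rcases Nat.eq_zero_or_pos n with hn0 | hnpos
      · -- N = ∅ : impossible
        subst hn0
        have hNe : N = ∅ := by rw [hNdef]; simp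
        obtain ⟨z⟩ := (inferInstance : Nonempty X)
        obtain ⟨j, hj⟩ := hcase' z (by rw [hNe]; exact notMem_empty z)
        obtain ⟨u, hu'⟩ := (hU j).2
        obtain ⟨Czu, h1, h2, h3, h4, h5⟩ := hsemi z u
        have : u ∈ clsOf N z := ⟨Czu, h1, h2.2, by rw [hNe]; exact inter_empty _, h4, h5⟩
        exact absurd (hj ▸ (⟨this, hu'⟩ : u ∈ clsOf N z ∩ U j)) (notMem_empty u)
      · have hNne : N.Nonempty := by
          obtain ⟨p, hp⟩ := (hK ⟨0, hnpos⟩).2.2.1.nonempty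
          exact ⟨p, mem_iUnion.mpr ⟨⟨0, hnpos⟩, hp⟩⟩
        set S : Fin n → Fin k → Set X := fun i j =>
          {z | z ∉ N ∧ (closure (clsOf N z) ∩ K i).Nonempty ∧ clsOf N z ∩ U j = ∅}
          with hS
        set Pre : Fin n → Fin k → Set X := fun i j =>
          K i ∪ ⋃ z ∈ S i j, closure (clsOf N z) with hPre
        set Λ : Fin n → Fin k → Set X := fun i j => closure (Pre i j) with hΛ
        have hΛcl : ∀ i j, IsClosed (Λ i j) := fun i j => isClosed_closure
        have hΛpc : ∀ i j, IsPreconnected (Λ i j) := by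
          intro i j
          apply IsPreconnected.closure
          obtain ⟨p0, hp0⟩ := (hK i).2.1.1
          have heq : Pre i j =
              ⋃₀ ({K i} ∪ (fun z => K i ∪ closure (clsOf N z)) '' (S i j)) := by
            ext x
            simp only [hPre, mem_union, mem_sUnion, mem_iUnion, mem_singleton_iff,
              mem_image, exists_prop]
            constructor
            · rintro (hx | ⟨z, hz, hx⟩)
              · exact ⟨K i, Or.inl rfl, hx⟩
              · exact ⟨K i ∪ closure (clsOf N z), Or.inr ⟨z, hz, rfl⟩, Or.inr hx⟩
            · rintro ⟨s, (rfl | ⟨z, hz, rfl⟩), hx⟩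
              · exact Or.inl hx
              · rcases hx with hx | hx
                · exact Or.inl hx
                · exact Or.inr ⟨z, hz, hx⟩
          rw [heq]
          apply isPreconnected_sUnion p0
          · rintro s (rfl | ⟨z, hz, rfl⟩)
            · exact hp0
            · exact Or.inl hp0
          · rintro s (rfl | ⟨z, hz, rfl⟩)
            · exact (hK i).2.1.2
            · obtain ⟨q, hq1, hq2⟩ := hz.2.1
              exact IsPreconnected.union q hq2 hq1 (hK i).2.1.2
                (clsOf_preconnected N z).closure
        have hΛne : ∀ i j, (Λ i j).Nonempty := by
          intro i j
          obtain ⟨p0, hp0⟩ := (hK i).2.1.1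
          exact ⟨p0, subset_closure (Or.inl hp0)⟩
        have hΛproper : ∀ i j, Λ i j ≠ Set.univ := by
          intro i j h
          obtain ⟨w, hw1, hw2⟩ := hUN j
          have hsub : Pre i j ⊆ (U j ∩ Nᶜ)ᶜ := by
            rintro q (hq | hq)
            · intro hq'
              exact hq'.2 (mem_iUnion.mpr ⟨i, hq⟩)
            · simp only [mem_iUnion, exists_prop] at hq
              obtain ⟨z, hz, hq⟩ := hq
              have hclsub : closure (clsOf N z) ⊆ (U j)ᶜ := by
                apply closure_minimal
                · intro y hy hyU
                  exact absurd (hz.2.2 ▸ (⟨hy, hyU⟩ : y ∈ clsOf N z ∩ U j))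
                    (notMem_empty y)
                · exact isClosed_compl_iff.mpr (hU j).1
              intro hq'
              exact hclsub hq hq'.1
          have hΛsub : Λ i j ⊆ (U j ∩ Nᶜ)ᶜ :=
            closure_minimal hsub (isClosed_compl_iff.mpr ((hU j).1.inter hNcl.isOpen_compl))
          exact hΛsub (h ▸ mem_univ w) ⟨hw1, hw2⟩
        -- the finite family
        set 𝔉 : Finset (Set X) :=
          Finset.image (fun p : Fin n × Fin k => Λ p.1 p.2) Finset.univ with h𝔉
        have hprops : ∀ A ∈ 𝔉, IsClosed A ∧ IsPreconnected A ∧ A.Nonempty ∧ A ≠ Set.univ := by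
          intro A hA
          obtain ⟨p, _, rfl⟩ := Finset.mem_image.mp hA
          exact ⟨hΛcl p.1 p.2, hΛpc p.1 p.2, hΛne p.1 p.2, hΛproper p.1 p.2⟩
        have hcover : ⋃₀ (↑𝔉 : Set (Set X)) = Set.univ := by
          rw [eq_univ_iff_forall]
          intro x
          by_cases hxN : x ∈ N
          · obtain ⟨i, hi⟩ := mem_iUnion.mp hxN
            exact ⟨Λ i ⟨0, hkpos⟩,
              Finset.mem_coe.mpr (Finset.mem_image.mpr ⟨⟨i, ⟨0, hkpos⟩⟩, Finset.mem_univ _, rfl⟩),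
              subset_closure (Or.inl hi)⟩
          · obtain ⟨j, hj⟩ := hcase' x hxN
            obtain ⟨w, hw⟩ := (hU j).2
            have hwcls : w ∉ clsOf N x := fun h =>
              absurd (hj ▸ (⟨h, hw⟩ : w ∈ clsOf N x ∩ U j)) (notMem_empty w)
            obtain ⟨p, hp1, hp2⟩ := my_dagger hsemi hNcl hNne hxN hwcls
            obtain ⟨i, hi⟩ := mem_iUnion.mp hp2
            refine ⟨Λ i j,
              Finset.mem_coe.mpr (Finset.mem_image.mpr ⟨⟨i, j⟩, Finset.mem_univ _, rfl⟩),
              subset_closure (Or.inr ?_)⟩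
            have hxS : x ∈ S i j := ⟨hxN, ⟨p, hp1, hi⟩, hj⟩
            exact mem_biUnion hxS (subset_closure (mem_clsOf_self hxN))
        exact my_FLn hindec 𝔉.card 𝔉 le_rfl hprops hcover
end

section
/- Let X be a separable metrizable indecomposable semicontinuum with more than one point and let K_0, K_1, …, K_{n-1} be finitely many proper subcontinua of X. Then the union K_0 ∪ ⋯ ∪ K_{n-1} has empty interior in X. -/
/-!
A proper closed connected set `K` with nonempty interior would decompose `X`. If `Kᶜ` is
connected, take `K` and `closure Kᶜ`, which is proper because it misses `interior K`. Otherwise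
`Kᶜ = U ∪ V` with `U`, `V` disjoint, open and nonempty, and `K ∪ U`, `K ∪ V` are proper, closed
(their complements are `V` and `U`) and connected. So each `K i` is closed with empty interior,
and a finite union of closed sets with empty interior has empty interior.
-/

open Set

theorem compl_union_eq_of_compl_eq_union {α : Type*} {K U V : Set α} (hKUV : Kᶜ = U ∪ V)
    (hUV : Disjoint U V) : (K ∪ U)ᶜ = V := by
  rw [compl_union, hKUV, union_inter_distrib_right, inter_compl_self, empty_union,
    inter_eq_left.2 hUV.symm.subset_compl_right]

section

variable {X : Type*} [TopologicalSpace X]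

theorem interior_iUnion_eq_empty_of_isClosed {ι : Type*} [Finite ι] {s : ι → Set X}
    (hc : ∀ i, IsClosed (s i)) (hi : ∀ i, interior (s i) = ∅) : interior (⋃ i, s i) = ∅ := by
  classical
  cases nonempty_fintype ι
  suffices ∀ t : Finset ι, interior (⋃ i ∈ t, s i) = ∅ by simpa using this Finset.univ
  intro t
  induction t using Finset.induction_on with
  | empty => simp
  | insert a t _ ih =>
    rw [Finset.set_biUnion_insert, interior_union_isClosed_of_interior_empty (hc a) ih, hi a]

/-- The piece of a separation of `K ∪ U` that avoids `K` lies in `U`, hence is clopen in `X`. -/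
theorem IsPreconnected.union_of_isOpen_of_isClosed_union [ConnectedSpace X] {K U : Set X}
    (hK : IsPreconnected K) (hU : IsOpen U) (hKU : IsClosed (K ∪ U)) :
    IsPreconnected (K ∪ U) := by
  rw [isPreconnected_iff_subset_of_fully_disjoint_closed hKU]
  intro u v hu hv hcover huv
  wlog hKu : K ⊆ u generalizing u v
  · have hKv : K ⊆ v := by
      have := isPreconnected_iff_subset_of_disjoint_closed.1 hK u v hu hv
        (subset_union_left.trans hcover) (by simp [huv.inter_eq])
      tauto
    rw [union_comm u v] at hcover
    exact (this v u hv hu hcover huv.symm hKv).symm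
  have hpiece : (K ∪ U) ∩ v = U ∩ uᶜ := by
    ext x
    have hx := @hcover x
    have hxK := @hKu x
    have hxuv := huv.notMem_of_mem_left (a := x)
    simp only [mem_inter_iff, mem_union, mem_compl_iff] at hx ⊢
    tauto
  have hclopen : IsClopen ((K ∪ U) ∩ v) :=
    ⟨hKU.inter hv, hpiece ▸ hU.inter hu.isOpen_compl⟩
  rcases isClopen_iff.1 hclopen with h | h
  · refine Or.inl fun x hx => (hcover hx).resolve_right fun hxv => ?_
    exact (h ▸ mem_inter hx hxv : x ∈ (∅ : Set X))
  · exact Or.inr fun x hx => (h.symm ▸ mem_univ x : x ∈ (K ∪ U) ∩ v).2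

theorem isClosed_isConnected_union_ne_univ_of_compl_eq_union [ConnectedSpace X] {K U V : Set X}
    (hK : IsConnected K) (hU : IsOpen U) (hV : IsOpen V) (hVne : V.Nonempty)
    (hKUV : Kᶜ = U ∪ V) (hUV : Disjoint U V) :
    IsClosed (K ∪ U) ∧ IsConnected (K ∪ U) ∧ K ∪ U ≠ univ := by
  have hcompl := compl_union_eq_of_compl_eq_union hKUV hUV
  have hclosed : IsClosed (K ∪ U) := by rw [← isOpen_compl_iff, hcompl]; exact hV
  refine ⟨hclosed, ⟨hK.nonempty.mono subset_union_left,
    hK.isPreconnected.union_of_isOpen_of_isClosed_union hU hclosed⟩, fun h => ?_⟩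
  rw [← compl_empty_iff, hcompl] at h
  exact hVne.ne_empty h

theorem exists_decomposition_of_interior_nonempty [ConnectedSpace X] {K : Set X}
    (hcl : IsClosed K) (hconn : IsConnected K) (hne : K ≠ univ) (hint : (interior K).Nonempty) :
    ∃ A B : Set X, IsClosed A ∧ IsConnected A ∧ A ≠ univ ∧
      IsClosed B ∧ IsConnected B ∧ B ≠ univ ∧ A ∪ B = univ := by
  by_cases hc : IsPreconnected Kᶜ
  · refine ⟨K, closure Kᶜ, hcl, hconn, hne, isClosed_closure,
      ⟨(nonempty_compl.2 hne).closure, hc.closure⟩, ?_, ?_⟩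
    · rw [closure_compl, Ne, compl_univ_iff]
      exact hint.ne_empty
    · exact eq_univ_of_subset (union_subset_union_right K subset_closure) (union_compl_self K)
  · rw [IsPreconnected] at hc
    push Not at hc
    obtain ⟨p, q, hp, hq, hcover, hpne, hqne, hpq⟩ := hc
    have hsplit : Kᶜ = (Kᶜ ∩ p) ∪ (Kᶜ ∩ q) := by
      rw [← inter_union_distrib_left, inter_eq_left.2 hcover]
    have hdisj : Disjoint (Kᶜ ∩ p) (Kᶜ ∩ q) := by
      rw [disjoint_iff_inter_eq_empty, ← inter_inter_distrib_left, hpq]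
    have hopen : IsOpen Kᶜ := hcl.isOpen_compl
    obtain ⟨hA, hAconn, hAne⟩ := isClosed_isConnected_union_ne_univ_of_compl_eq_union hconn
      (hopen.inter hp) (hopen.inter hq) hqne hsplit hdisj
    obtain ⟨hB, hBconn, hBne⟩ := isClosed_isConnected_union_ne_univ_of_compl_eq_union hconn
      (hopen.inter hq) (hopen.inter hp) hpne (hsplit.trans (union_comm _ _)) hdisj.symm
    refine ⟨_, _, hA, hAconn, hAne, hB, hBconn, hBne, ?_⟩
    rw [← union_union_distrib_left, ← hsplit, union_compl_self]

end

theorem stmt_7_general {X : Type*} [TopologicalSpace X] [TopologicalSpace.MetrizableSpace X]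
    [ConnectedSpace X]
    (hindec : ¬ ∃ A B : Set X,
      IsClosed A ∧ IsConnected A ∧ A ≠ Set.univ ∧
      IsClosed B ∧ IsConnected B ∧ B ≠ Set.univ ∧ A ∪ B = Set.univ)
    (n : ℕ) (K : Fin n → Set X)
    (hK : ∀ i, IsCompact (K i) ∧ IsConnected (K i) ∧ (K i).Nontrivial ∧ K i ≠ Set.univ) :
    interior (⋃ i, K i) = ∅ := by
  have hclosed i : IsClosed (K i) := (hK i).1.isClosed
  refine interior_iUnion_eq_empty_of_isClosed hclosed fun i => ?_
  by_contra hint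
  exact hindec <| exists_decomposition_of_interior_nonempty (hclosed i) (hK i).2.1 (hK i).2.2.2
    (nonempty_iff_ne_empty.2 hint)

/-- Let `X` be a separable metrizable indecomposable semicontinuum with more
than one point, and let `K 0, …, K (n-1)` be finitely many proper subcontinua of `X`. Then
`⋃ i, K i` has empty interior in `X`. -/
theorem stmt_7 {X : Type*} [TopologicalSpace X] [TopologicalSpace.MetrizableSpace X]
    [TopologicalSpace.SeparableSpace X] [ConnectedSpace X] [Nontrivial X]
    (hsemi : ∀ x y : X, ∃ K : Set X,
      IsCompact K ∧ IsConnected K ∧ K.Nontrivial ∧ x ∈ K ∧ y ∈ K)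
    (hindec : ¬ ∃ A B : Set X,
      IsClosed A ∧ IsConnected A ∧ A ≠ Set.univ ∧
      IsClosed B ∧ IsConnected B ∧ B ≠ Set.univ ∧ A ∪ B = Set.univ)
    (n : ℕ) (K : Fin n → Set X)
    (hK : ∀ i, IsCompact (K i) ∧ IsConnected (K i) ∧ (K i).Nontrivial ∧ K i ≠ Set.univ) :
    interior (⋃ i, K i) = ∅ :=
  stmt_7_general hindec n K hK
end
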